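/- arXiv:2109.11438 — 7 statements merged into one kernel-verified Lean document; each statement's English description precedes it below -/
import Mathlib

section
/- For every integer n ≥ 2, there exist nearly disjoint graphs G₁, G₂, G₃, each of chromatic number at most n, such that the chromatic number of G₁ ∪ G₂ ∪ G₃ is at least n + 1. -/
/-!
The complete graph on `n + 1` vertices minus one edge `ab` is `n`-colourable (merge `b` into
`a`), and by pigeonhole every `n`-colouring of it gives `a` and `b` the same colour. Two such
graphs on `{0, …, n}` and `{n, …, 2n}`, sharing only the vertex `n`, therefore force `0` and
`2n` to share a colour, which the single edge `{0, 2n}` forbids.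
-/

open Finset

namespace SimpleGraph

variable {V : Type*}

def completeOn (S : Set V) : SimpleGraph V where
  Adj u v := u ≠ v ∧ u ∈ S ∧ v ∈ S

lemma colorable_card_of_le_completeOn {G : SimpleGraph V} {S : Finset V} (hS : S.Nonempty)
    (hG : G ≤ completeOn S) : G.Colorable S.card := by
  classical
  obtain ⟨s, hs⟩ := hS
  let f : V → S := fun v => if h : v ∈ S then ⟨v, h⟩ else ⟨s, hs⟩
  have hf : ∀ v (h : v ∈ S), f v = ⟨v, h⟩ := fun v h => dif_pos h
  refine (Coloring.mk f fun {u v} huv => ?_).colorable.mono (by simp)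
  obtain ⟨hne, hu, hv⟩ := hG huv
  simpa [hf u hu, hf v hv] using hne

lemma colorable_card_erase_of_le_deleteEdges_completeOn [DecidableEq V] {G : SimpleGraph V}
    {S : Finset V} {a b : V} (ha : a ∈ S) (hab : a ≠ b)
    (hG : G ≤ (completeOn S).deleteEdges {s(a, b)}) : G.Colorable (S.erase b).card := by
  let merge : V → V := fun v => if v = b then a else v
  have hmerge : ∀ v ∈ S, merge v ∈ S.erase b := by
    intro v hv
    by_cases hvb : v = b <;> simp [merge, hvb, hab, hv, ha]
  refine Colorable.of_hom (G' := completeOn (S.erase b)) ⟨merge, fun {u v} huv => ?_⟩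
    (colorable_card_of_le_completeOn ⟨a, mem_erase.2 ⟨hab, ha⟩⟩ le_rfl)
  obtain ⟨⟨hne, hu, hv⟩, hnab⟩ := deleteEdges_adj.1 (hG huv)
  refine ⟨?_, hmerge u hu, hmerge v hv⟩
  simp only [Set.mem_singleton_iff, Sym2.eq_iff] at hnab
  simp only [merge]
  grind

lemma Coloring.eq_of_deleteEdges_completeOn_le {G : SimpleGraph V} {α : Type*} [Fintype α]
    (C : G.Coloring α) {S : Finset V} (hS : Fintype.card α < S.card) {a b : V}
    (hG : (completeOn S).deleteEdges {s(a, b)} ≤ G) : C a = C b := by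
  by_contra hCab
  have hinj : Set.InjOn C S := by
    intro u hu v hv hCuv
    by_contra huv
    refine C.valid (hG (deleteEdges_adj.2 ⟨⟨huv, hu, hv⟩, fun h => hCab ?_⟩)) hCuv
    obtain ⟨rfl, rfl⟩ | ⟨rfl, rfl⟩ := Sym2.eq_iff.1 (Set.mem_singleton_iff.1 h)
    · exact hCuv
    · exact hCuv.symm
  exact hS.not_ge (card_le_card_of_injOn C (fun _ _ => mem_univ _) hinj)

end SimpleGraph

open SimpleGraph

def nearlyDisjointParts (n : ℕ) : Fin 3 → Finset ℕ :=
  ![range (n + 1), Icc n (2 * n), {0, 2 * n}]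

def nearlyDisjointGraphs (n : ℕ) : Fin 3 → SimpleGraph ℕ :=
  ![(completeOn (range (n + 1))).deleteEdges {s(0, n)},
    (completeOn (Icc n (2 * n))).deleteEdges {s(n, 2 * n)},
    completeOn ({0, 2 * n} : Finset ℕ)]

lemma nearlyDisjointGraphs_le_completeOn (n : ℕ) (i : Fin 3) :
    nearlyDisjointGraphs n i ≤ completeOn (nearlyDisjointParts n i) := by
  fin_cases i
  · exact deleteEdges_le _
  · exact deleteEdges_le _
  · exact fun _ _ => id

lemma card_nearlyDisjointParts_inter_le_one (n : ℕ) {i j : Fin 3} (hij : i ≠ j) :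
    (nearlyDisjointParts n i ∩ nearlyDisjointParts n j).card ≤ 1 := by
  rw [card_le_one]
  fin_cases i <;> fin_cases j <;> simp [nearlyDisjointParts] at hij ⊢ <;> grind

lemma colorable_nearlyDisjointGraphs {n : ℕ} (hn : 2 ≤ n) (i : Fin 3) :
    (nearlyDisjointGraphs n i).Colorable n := by
  fin_cases i
  · refine (colorable_card_erase_of_le_deleteEdges_completeOn (G := nearlyDisjointGraphs n 0)
      (S := range (n + 1)) (a := 0) (b := n) (by simp) (by omega) le_rfl).mono ?_
    simp
  · refine (colorable_card_erase_of_le_deleteEdges_completeOn (G := nearlyDisjointGraphs n 1)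
      (S := Icc n (2 * n)) (a := n) (b := 2 * n) (mem_Icc.2 ⟨le_rfl, by omega⟩) (by omega)
      le_rfl).mono ?_
    simp only [Icc_erase_right, Nat.card_Ico]; omega
  · exact (colorable_card_of_le_completeOn ⟨0, by simp [nearlyDisjointParts]⟩
      (nearlyDisjointGraphs_le_completeOn n 2)).mono (card_le_two.trans hn)

lemma not_colorable_iSup_nearlyDisjointGraphs {n : ℕ} (hn : 1 ≤ n) :
    ¬(⨆ i, nearlyDisjointGraphs n i).Colorable n := by
  rintro ⟨C⟩
  have h0 : C 0 = C n :=
    C.eq_of_deleteEdges_completeOn_le (by simp) (le_iSup (nearlyDisjointGraphs n) 0)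
  have h1 : C n = C (2 * n) :=
    C.eq_of_deleteEdges_completeOn_le (by simp only [Fintype.card_fin, Nat.card_Icc]; omega)
      (le_iSup (nearlyDisjointGraphs n) 1)
  exact C.valid (le_iSup (nearlyDisjointGraphs n) 2 ⟨by omega, by simp, by simp⟩)
    (h0.trans h1)

/-- **Coloring nearly disjoint graphs of bounded chromatic number (lower bound).**
For every `n ≥ 2` there exist nearly disjoint graphs `G₁, G₂, G₃` (with vertex sets
`S 0, S 1, S 2`), each of chromatic number at most `n`, whose union has chromatic
number at least `n + 1`. -/
theorem chromatic_nearly_disjoint_lower (n : ℕ) (hn : 2 ≤ n) :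
    ∃ (V : Type) (_ : DecidableEq V) (G : Fin 3 → SimpleGraph V) (S : Fin 3 → Finset V),
      (∀ i u v, (G i).Adj u v → u ∈ S i ∧ v ∈ S i) ∧
      (∀ i j, i ≠ j → (S i ∩ S j).card ≤ 1) ∧
      (∀ i, (G i).chromaticNumber ≤ (n : ℕ∞)) ∧
      ((n + 1 : ℕ) : ℕ∞) ≤ (⨆ i, G i).chromaticNumber := by
  refine ⟨ℕ, inferInstance, nearlyDisjointGraphs n, nearlyDisjointParts n,
    fun i u v huv => (nearlyDisjointGraphs_le_completeOn n i huv).2,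
    fun i j => card_nearlyDisjointParts_inter_le_one n,
    fun i => chromaticNumber_le_iff_colorable.2 (colorable_nearlyDisjointGraphs hn i), ?_⟩
  rw [Nat.cast_add_one, ENat.add_one_le_iff (ENat.natCast_ne_top n), ← not_le,
    chromaticNumber_le_iff_colorable]
  exact not_colorable_iSup_nearlyDisjointGraphs (by omega)
end

section
/- For every C ≥ 1 and 0 < ε < 1 there exists D₂ = D₂(C, ε) such that the following holds for every D ≥ D₂: if log⁻¹ D ≥ p ≥ log⁻² D and 10CD ≥ Λ ≥ (1 + ε)D, then (λ'(Λ, D, C, p) − Λ^{4/5}) / (D'(Λ, D, C, p) + D^{4/5}) ≥ (1 + εp/4) · Λ/D, and moreover D'(Λ, D, C, p) ≥ (1 − pC)D. -/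
/-!
Write `q = p/Λ`, `t = DCq` and `d = Dq`, so that `λ'/Λ = (1 - q)^{DC} ≈ 1 - t` and
`D'/D ≈ (1 - p)(1 - t + d) + pt ≈ 1 - t - (p - d)`. Since `Λ ≥ (1 + ε)D`, the gap `p - d` is at
least `εp/(1 + ε) ≥ εp/2`. Every other error is either second order in `q, p, t ≤ Cp`, hence at
most `(Cp)² ≤ εp/200` once `log D ≥ 200C²/ε`, or one of `Λ^{-1/5} ≤ D^{-1/5}`, which is at most
`εp/24` because `p ≥ log⁻² D` while `log² D = o(D^{1/5})`.
-/

/-- `λ'(Λ, D, C, p) = (1 - p/Λ)^{DC} Λ` (real exponents). -/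
noncomputable def lamNew (Λ D C p : ℝ) : ℝ := (1 - p / Λ) ^ (D * C) * Λ

/-- `D'(Λ, D, C, p) = ((1 - p)(1 - p/Λ)^{D(C-1)} + p(1 - (1 - p/Λ)^{DC})) D`. -/
noncomputable def degNew (Λ D C p : ℝ) : ℝ :=
  ((1 - p) * (1 - p / Λ) ^ (D * (C - 1)) + p * (1 - (1 - p / Λ) ^ (D * C))) * D

open Real Filter

lemma exp_neg_le_one_sub_add_sq {x : ℝ} (hx : 0 ≤ x) : exp (-x) ≤ 1 - x + x ^ 2 := by
  rw [exp_neg, inv_le_iff_one_le_mul₀ (exp_pos x)]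
  nlinarith [add_one_le_exp x, pow_nonneg hx 3]

lemma one_sub_rpow_le {q y : ℝ} (hq0 : 0 ≤ q) (hq1 : q < 1) (hy : 0 ≤ y) :
    (1 - q) ^ y ≤ 1 - y * q + (y * q) ^ 2 := by
  have hlog : log (1 - q) ≤ -q := by linarith [log_le_sub_one_of_pos (sub_pos.2 hq1)]
  calc (1 - q) ^ y = exp (log (1 - q) * y) := rpow_def_of_pos (sub_pos.2 hq1) y
    _ ≤ exp (-(y * q)) := exp_le_exp.2 (by nlinarith)
    _ ≤ _ := exp_neg_le_one_sub_add_sq (mul_nonneg hy hq0)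

lemma one_sub_mul_le_one_sub_rpow {q y : ℝ} (hq : q ≤ 1 / 2) (hy : 0 ≤ y) :
    1 - y * q * (1 + 2 * q) ≤ (1 - q) ^ y := by
  have hpos : 0 < 1 - q := by linarith
  have hinv : (1 - q)⁻¹ ≤ 1 + q * (1 + 2 * q) := by
    rw [inv_le_iff_one_le_mul₀ hpos]
    nlinarith [mul_nonneg (sq_nonneg q) (by linarith : (0 : ℝ) ≤ 1 - 2 * q)]
  have hlog : -(q * (1 + 2 * q)) ≤ log (1 - q) := by
    linarith [one_sub_inv_le_log_of_pos hpos]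
  calc 1 - y * q * (1 + 2 * q) ≤ log (1 - q) * y + 1 := by nlinarith
    _ ≤ (1 - q) ^ y := by
      rw [rpow_def_of_pos hpos]; exact add_one_le_exp _

lemma rpow_div_self_le_rpow_div_self {a b s : ℝ} (ha : 0 < a) (hab : a ≤ b) (hs : s ≤ 1) :
    b ^ s / b ≤ a ^ s / a := by
  rw [← rpow_sub_one (ha.trans_le hab).ne', ← rpow_sub_one ha.ne']
  exact rpow_le_rpow_of_nonpos ha hab (by linarith)

lemma eventually_log_sq_mul_rpow_le {s c : ℝ} (hs : s < 1) (hc : 0 < c) :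
    ∀ᶠ x in atTop, log x ^ 2 * x ^ s ≤ c * x := by
  filter_upwards [(isLittleO_log_rpow_rpow_atTop 2 (sub_pos.2 hs)).def hc,
    eventually_gt_atTop 0] with x hx hx0
  rw [rpow_two, norm_of_nonneg (sq_nonneg _), norm_of_nonneg (rpow_nonneg hx0.le _)] at hx
  calc log x ^ 2 * x ^ s ≤ c * x ^ (1 - s) * x ^ s := by gcongr
    _ = c * x := by rw [mul_assoc, ← rpow_add hx0, sub_add_cancel, rpow_one]

lemma linearized_ratio_improvement {ε p q s t δ r : ℝ} (hq0 : 0 ≤ q) (hqp : q ≤ p) (hpδ : p ≤ δ)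
    (hs0 : 0 ≤ s) (hst : s ≤ t) (htδ : t ≤ δ) (hδ : δ ≤ 1 / 200) (hδ2 : 200 * δ ^ 2 ≤ ε * p)
    (hr : 24 * r ≤ ε * p) (hgap : ε * p ≤ 2 * (p - (t - s))) :
    (1 + ε * p / 4) * ((1 - p) * (1 - s + s ^ 2) + p * t * (1 + 2 * q) + r) ≤
      1 - t * (1 + 2 * q) - r := by
  -- `δ` dominates `p, q, s, t`, so each second-order term is at most `δ² ≤ εp / 200`
  have hp0 : 0 ≤ p := hq0.trans hqp
  have hsδ : s ≤ δ := hst.trans htδ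
  have hss : s * s ≤ δ ^ 2 := by nlinarith [mul_le_mul hsδ hsδ hs0 (by linarith)]
  have hps : p * s ≤ δ ^ 2 := by nlinarith [mul_le_mul hpδ hsδ hs0 (by linarith)]
  have hpt : p * t ≤ δ ^ 2 := by nlinarith [mul_le_mul hpδ htδ (hs0.trans hst) (by linarith)]
  have htq : t * q ≤ δ ^ 2 := by nlinarith [mul_le_mul htδ (hqp.trans hpδ) hq0 (by linarith)]
  have hptq : p * t * q ≤ δ ^ 2 := by nlinarith [mul_le_mul_of_nonneg_right hpt hq0]
  set X := (1 - p) * (1 - s + s ^ 2) + p * t * (1 + 2 * q) + r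
  have hX : X ≤ 1 - s - p + 3 * δ ^ 2 + 2 * (p * t * q) + r := by nlinarith
  have hX' : ε * p / 4 * X ≤ ε * p / 4 * (11 / 10) :=
    mul_le_mul_of_nonneg_left (by nlinarith) (by nlinarith)
  nlinarith

section

variable {Λ D C p ε : ℝ}

lemma mul_div_le_of_mul_le (hΛ0 : 0 < Λ) (hΛ : (1 + ε) * D ≤ Λ) (hp0 : 0 ≤ p) :
    (1 + ε) * D * (p / Λ) ≤ p :=
  calc (1 + ε) * D * (p / Λ) ≤ Λ * (p / Λ) := by gcongr
    _ = p := mul_div_cancel₀ p hΛ0.ne'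

lemma one_sub_mul_mul_le_degNew (hC : 1 ≤ C) (hD : 0 ≤ D) (hΛ0 : 0 < Λ) (hΛ : (1 + ε) * D ≤ Λ)
    (hp0 : 0 ≤ p) (hp1 : p ≤ 1) (hqε : 2 * (p / Λ) ≤ ε) (hq : p / Λ ≤ 1 / 2) :
    (1 - p * C) * D ≤ degNew Λ D C p := by
  unfold degNew
  set q := p / Λ
  have hq0 : 0 ≤ q := div_nonneg hp0 hΛ0.le
  have hA : (1 - q) ^ (D * C) ≤ 1 := rpow_le_one (by linarith) (by linarith) (by positivity)
  have hB := one_sub_mul_le_one_sub_rpow hq (mul_nonneg hD (sub_nonneg.2 hC))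
  have hs : D * (C - 1) * q * (1 + 2 * q) ≤ (C - 1) * p := by
    have hDq : (1 + ε) * D * q ≤ p := mul_div_le_of_mul_le hΛ0 hΛ hp0
    have : 0 ≤ D * (C - 1) * q := by have := sub_nonneg.2 hC; positivity
    nlinarith
  gcongr
  nlinarith [mul_le_mul_of_nonneg_left (hB.trans' (sub_le_sub_left hs 1)) (sub_nonneg.2 hp1),
    mul_nonneg hp0 (sub_nonneg.2 hA), mul_nonneg (mul_nonneg hp0 hp0) (sub_nonneg.2 hC)]

lemma normalized_ratio_improvement (hC : 1 ≤ C) (hε0 : 0 < ε) (hε1 : ε ≤ 1) (hD : 1 ≤ D)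
    (hΛ : (1 + ε) * D ≤ Λ) (hp0 : 0 < p) (hpC : 200 * C ^ 2 * p ≤ ε)
    (hr : 24 * D ^ ((4 : ℝ) / 5) ≤ ε * p * D) :
    (1 + ε * p / 4) * ((1 - p) * (1 - p / Λ) ^ (D * (C - 1)) +
        p * (1 - (1 - p / Λ) ^ (D * C)) + D ^ ((4 : ℝ) / 5) / D) ≤
      (1 - p / Λ) ^ (D * C) - D ^ ((4 : ℝ) / 5) / D := by
  have hDΛ : D ≤ Λ := by nlinarith
  have hΛ0 : 0 < Λ := by linarith
  set q := p / Λ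
  have hq0 : 0 ≤ q := div_nonneg hp0.le hΛ0.le
  have hqp : q ≤ p := div_le_self hp0.le (hD.trans hDΛ)
  have hCp : 200 * (C * p) ≤ ε := by nlinarith
  have hpCp : p ≤ C * p := le_mul_of_one_le_left hp0.le hC
  have hDq : (1 + ε) * D * q ≤ p := mul_div_le_of_mul_le hΛ0 hΛ hp0.le
  have hs0 : 0 ≤ D * (C - 1) * q := by have := sub_nonneg.2 hC; positivity
  have hA := one_sub_mul_le_one_sub_rpow (by linarith : q ≤ 1 / 2)
    (by positivity : 0 ≤ D * C)
  have hB := one_sub_rpow_le hq0 (by linarith) (by nlinarith : 0 ≤ D * (C - 1))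
  have hgap : ε * p ≤ 2 * (p - (D * C * q - D * (C - 1) * q)) := by
    have hDq0 : 0 ≤ D * q := by positivity
    nlinarith [mul_le_mul_of_nonneg_left hDq (by linarith : 0 ≤ 2 - ε),
      mul_nonneg (mul_nonneg hε0.le (by linarith : 0 ≤ 1 - ε)) hDq0]
  have hst : D * (C - 1) * q ≤ D * C * q := by nlinarith
  have htδ : D * C * q ≤ C * p := by nlinarith
  have hδ2 : 200 * (C * p) ^ 2 ≤ ε * p := by nlinarith
  have hr' : 24 * (D ^ ((4 : ℝ) / 5) / D) ≤ ε * p := by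
    rw [mul_div_assoc', div_le_iff₀ (by linarith)]; exact hr
  have hcore := linearized_ratio_improvement hq0 hqp hpCp hs0 hst htδ (by linarith) hδ2 hr' hgap
  refine le_trans ?_ (hcore.trans (by linarith))
  have hX : (1 - p) * (1 - q) ^ (D * (C - 1)) + p * (1 - (1 - q) ^ (D * C)) ≤
      (1 - p) * (1 - D * (C - 1) * q + (D * (C - 1) * q) ^ 2) +
        p * (D * C * q) * (1 + 2 * q) := by
    have hA' : 1 - (1 - q) ^ (D * C) ≤ D * C * q * (1 + 2 * q) := by linarith
    nlinarith [mul_le_mul_of_nonneg_left hB (by linarith : 0 ≤ 1 - p),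
      mul_le_mul_of_nonneg_left hA' hp0.le]
  exact mul_le_mul_of_nonneg_left (by linarith) (by positivity)

lemma ratio_improvement_of_le (hC : 1 ≤ C) (hε0 : 0 < ε) (hε1 : ε ≤ 1) (hD : 1 ≤ D)
    (hΛ : (1 + ε) * D ≤ Λ) (hp0 : 0 < p) (hpC : 200 * C ^ 2 * p ≤ ε)
    (hr : 24 * D ^ ((4 : ℝ) / 5) ≤ ε * p * D) :
    (1 + ε * p / 4) * (Λ / D) ≤
        (lamNew Λ D C p - Λ ^ ((4 : ℝ) / 5)) / (degNew Λ D C p + D ^ ((4 : ℝ) / 5)) ∧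
      (1 - p * C) * D ≤ degNew Λ D C p := by
  have hDΛ : D ≤ Λ := by nlinarith
  have hΛ0 : 0 < Λ := by linarith
  have hCp : 200 * (C * p) ≤ ε := by nlinarith
  have hqp : p / Λ ≤ p := div_le_self hp0.le (hD.trans hDΛ)
  have hdeg := one_sub_mul_mul_le_degNew hC (by linarith) hΛ0 hΛ hp0.le (by nlinarith)
    (by nlinarith) (by nlinarith)
  refine ⟨?_, hdeg⟩
  have hden : 0 < degNew Λ D C p + D ^ ((4 : ℝ) / 5) := by
    have : 0 < D ^ ((4 : ℝ) / 5) := by positivity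
    nlinarith
  have key := normalized_ratio_improvement hC hε0 hε1 hD hΛ hp0 hpC hr
  have hΛr := rpow_div_self_le_rpow_div_self (by linarith) hDΛ (by norm_num : (4 : ℝ) / 5 ≤ 1)
  rw [le_div_iff₀ hden]
  unfold lamNew degNew
  set A := (1 - p / Λ) ^ (D * C)
  set X := (1 - p) * (1 - p / Λ) ^ (D * (C - 1)) + p * (1 - A)
  calc (1 + ε * p / 4) * (Λ / D) * (X * D + D ^ ((4 : ℝ) / 5))
      = (1 + ε * p / 4) * (X + D ^ ((4 : ℝ) / 5) / D) * Λ := by field_simp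
    _ ≤ (A - D ^ ((4 : ℝ) / 5) / D) * Λ := by gcongr
    _ ≤ (A - Λ ^ ((4 : ℝ) / 5) / Λ) * Λ := by gcongr
    _ = A * Λ - Λ ^ ((4 : ℝ) / 5) := by field_simp

end

/-- **Key calculation.**  For every `C ≥ 1` and `0 < ε < 1`, for all sufficiently large
`D`: if `(log D)⁻¹ ≥ p ≥ (log D)⁻²` and `10CD ≥ Λ ≥ (1 + ε)D`, then the ratio of
`λ'(Λ,D,C,p) - Λ^{4/5}` to `D'(Λ,D,C,p) + D^{4/5}` is at least `(1 + εp/4)·Λ/D`, and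
moreover `D'(Λ,D,C,p) ≥ (1 - pC)D`. -/
theorem ratio_improvement (C ε : ℝ) (hC : 1 ≤ C) (hε0 : 0 < ε) (hε1 : ε < 1) :
    ∃ D₂ : ℝ, ∀ D : ℝ, D₂ ≤ D → ∀ p Λ : ℝ,
      p ≤ (Real.log D)⁻¹ → ((Real.log D) ^ 2)⁻¹ ≤ p →
      Λ ≤ 10 * C * D → (1 + ε) * D ≤ Λ →
      (1 + ε * p / 4) * (Λ / D) ≤
          (lamNew Λ D C p - Λ ^ ((4 : ℝ) / 5)) / (degNew Λ D C p + D ^ ((4 : ℝ) / 5)) ∧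
      (1 - p * C) * D ≤ degNew Λ D C p := by
  have hM : 0 < 200 * C ^ 2 / ε := by positivity
  obtain ⟨D₂, hD₂⟩ := eventually_atTop.1 <| (eventually_ge_atTop 1).and <|
    (tendsto_log_atTop.eventually_ge_atTop (200 * C ^ 2 / ε)).and <|
      eventually_log_sq_mul_rpow_le (by norm_num : (4 : ℝ) / 5 < 1) (by positivity : 0 < ε / 24)
  refine ⟨D₂, fun D hD p Λ hp1 hp2 _ hΛ => ?_⟩
  obtain ⟨hD1, hlog, hpow⟩ := hD₂ D hD
  have hlog0 : 0 < log D := hM.trans_le hlog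
  have hp0 : 0 < p := lt_of_lt_of_le (by positivity) hp2
  have hpC : 200 * C ^ 2 * p ≤ ε := by
    have : p ≤ ε / (200 * C ^ 2) := by
      rw [← inv_div]; exact hp1.trans (inv_anti₀ hM hlog)
    rwa [le_div_iff₀' (by positivity)] at this
  have hr : 24 * D ^ ((4 : ℝ) / 5) ≤ ε * p * D := by
    have : 1 ≤ p * log D ^ 2 := by rwa [← inv_le_iff_one_le_mul₀ (by positivity)]
    nlinarith [rpow_nonneg (zero_le_one.trans hD1) ((4 : ℝ) / 5)]
  exact ratio_improvement_of_le hC hε0 hε1.le hD1 hΛ hp0 hpC hr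
end

section
/- Let G be a graph with list assignment L and let D be a positive real. If |L(v)| ≥ 8D for every v ∈ V(G) and Δ(G, L) ≤ D, then G is L-colorable. -/
open Finset

/-!
Write `f S` for the number of proper `L`-colorings of `G[S]`. By strong induction on `S`,
`f (insert v S) ≥ |L v| / 2 · f S` for `v ∉ S`. Indeed, the colorings of `G[S]` that give a color
`c ∈ L v` to a neighbor `u ∈ S` of `v` inject into the colorings of `G[S \ {u}]`, of which there
are at most `f S / (4D)` by induction since `|L u| ≥ 8D`. At most `D` neighbors of `v` have `c` in
their list, so at most `f S / 4` colorings of `G[S]` block `c` at `v`, and each of the `|L v|`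
colors extends at least half of them. As `f ∅ = 1`, the whole graph has a coloring.
-/

namespace SimpleGraph

variable {V α : Type*} [Fintype V] [DecidableEq V] [DecidableEq α] [Inhabited α]
  (G : SimpleGraph V) [DecidableRel G.Adj] (L : V → Finset α)

/-- Proper `L`-colorings of `G[S]`, extended by `default` outside `S` so that they form a finset
of total functions. -/
def partialListColorings (S : Finset V) : Finset (V → α) :=
  {φ ∈ Fintype.piFinset fun v => if v ∈ S then L v else {default} |
    ∀ u ∈ S, ∀ w ∈ S, G.Adj u w → φ u ≠ φ w}

variable {G L}

theorem mem_partialListColorings {S : Finset V} {φ : V → α} :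
    φ ∈ G.partialListColorings L S ↔
      (∀ w ∈ S, φ w ∈ L w) ∧ (∀ w ∉ S, φ w = default) ∧
        ∀ u ∈ S, ∀ w ∈ S, G.Adj u w → φ u ≠ φ w := by
  simp only [partialListColorings, mem_filter, Fintype.mem_piFinset, ← and_assoc]
  refine and_congr_left' ⟨fun h => ⟨fun w hw => ?_, fun w hw => ?_⟩, fun h w => ?_⟩
  · simpa [hw] using h w
  · simpa [hw] using h w
  · by_cases hw : w ∈ S <;> simp [hw, h.1, h.2]

theorem partialListColorings_empty : G.partialListColorings L ∅ = {fun _ => default} := by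
  ext φ
  simp [mem_partialListColorings, funext_iff]

theorem update_mem_partialListColorings_insert {S : Finset V} {v : V} {c : α} {φ : V → α}
    (hφ : φ ∈ G.partialListColorings L S) (hc : c ∈ L v)
    (hfree : ∀ u ∈ S, G.Adj v u → φ u ≠ c) :
    Function.update φ v c ∈ G.partialListColorings L (insert v S) := by
  obtain ⟨hL, hdef, hproper⟩ := mem_partialListColorings.1 hφ
  refine mem_partialListColorings.2 ⟨?_, ?_, ?_⟩
  · simp only [forall_mem_insert, Function.update_self, hc, true_and]
    intro w hw
    rcases eq_or_ne w v with rfl | hwv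
    · simpa
    · simpa [hwv] using hL w hw
  · intro w hw
    simp only [mem_insert, not_or] at hw
    simpa [hw.1] using hdef w hw.2
  · intro u hu w hw hadj
    rw [mem_insert] at hu hw
    by_cases huv : u = v <;> by_cases hwv : w = v
    · exact absurd (huv ▸ hwv ▸ hadj) G.irrefl
    · subst huv
      simpa [hwv] using (hfree w (hw.resolve_left hwv) hadj).symm
    · subst hwv
      simpa [huv] using hfree u (hu.resolve_left huv) hadj.symm
    · simpa [huv, hwv] using hproper u (hu.resolve_left huv) w (hw.resolve_left hwv) hadj

theorem sum_card_filter_le_card_partialListColorings_insert {S : Finset V} {v : V} (hv : v ∉ S) :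
    ∑ c ∈ L v, #{φ ∈ G.partialListColorings L S | ∀ u ∈ S, G.Adj v u → φ u ≠ c}
      ≤ #(G.partialListColorings L (insert v S)) := by
  rw [← card_sigma]
  refine card_le_card_of_injOn (fun p => Function.update p.2 v p.1) ?_ ?_
  · rintro ⟨c, φ⟩ h
    simp only [coe_sigma, Set.mem_sigma_iff, mem_coe, mem_filter] at h
    exact update_mem_partialListColorings_insert h.2.1 h.1 h.2.2
  · have hdefault : ∀ p ∈ (L v).sigma fun c =>
        {φ ∈ G.partialListColorings L S | ∀ u ∈ S, G.Adj v u → φ u ≠ c}, p.2 v = default :=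
      fun p hp => (mem_partialListColorings.1 (mem_filter.1 (mem_sigma.1 hp).2).1).2.1 v hv
    rintro ⟨c, φ⟩ hφ ⟨d, ψ⟩ hψ h
    have hcd : c = d := by simpa using congr_fun h v
    subst hcd
    have hφψ : φ = ψ := by
      funext w
      rcases eq_or_ne w v with rfl | hwv
      · exact (hdefault _ hφ).trans (hdefault _ hψ).symm
      · simpa [hwv] using congr_fun h w
    rw [hφψ]

theorem card_filter_apply_eq_le_card_partialListColorings_erase (S : Finset V) (u : V) (c : α) :
    #{φ ∈ G.partialListColorings L S | φ u = c} ≤ #(G.partialListColorings L (S.erase u)) := by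
  refine card_le_card_of_injOn (fun φ => Function.update φ u default) (fun φ hφ => ?_) ?_
  · obtain ⟨hL, hdef, hproper⟩ := mem_partialListColorings.1 (mem_filter.1 hφ).1
    refine mem_partialListColorings.2 ⟨fun w hw => ?_, fun w hw => ?_, fun a ha b hb hab => ?_⟩
    · simpa [ne_of_mem_erase hw] using hL w (mem_of_mem_erase hw)
    · rcases eq_or_ne w u with rfl | hwu
      · simp
      · simpa [hwu] using hdef w (by simpa [hwu] using hw)
    · simpa [ne_of_mem_erase ha, ne_of_mem_erase hb] using
        hproper a (mem_of_mem_erase ha) b (mem_of_mem_erase hb) hab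
  · intro φ hφ ψ hψ h
    funext w
    rcases eq_or_ne w u with rfl | hwu
    · exact (mem_filter.1 hφ).2.trans (mem_filter.1 hψ).2.symm
    · simpa [hwu] using congr_fun h w

theorem card_filter_not_forall_le_sum (S : Finset V) (v : V) (c : α) :
    #{φ ∈ G.partialListColorings L S | ¬ ∀ u ∈ S, G.Adj v u → φ u ≠ c}
      ≤ ∑ u ∈ S with G.Adj v u ∧ c ∈ L u, #{φ ∈ G.partialListColorings L S | φ u = c} := by
  refine (card_le_card fun φ hφbad => ?_).trans card_biUnion_le
  obtain ⟨hφ, hbad⟩ := mem_filter.1 hφbad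
  push Not at hbad
  obtain ⟨u, hu, hadj, hφu⟩ := hbad
  have hcu : c ∈ L u := hφu ▸ (mem_partialListColorings.1 hφ).1 u hu
  exact mem_biUnion.2 ⟨u, mem_filter.2 ⟨hu, hadj, hcu⟩, mem_filter.2 ⟨hφ, hφu⟩⟩

theorem four_mul_card_filter_not_forall_le {D : ℝ} (hD : 0 < D) {S : Finset V} {v : V} {c : α}
    (hdeg : (#{u ∈ G.neighborFinset v | c ∈ L u} : ℝ) ≤ D)
    (hS : ∀ u ∈ S, 4 * D * #(G.partialListColorings L (S.erase u)) ≤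
      (#(G.partialListColorings L S) : ℝ)) :
    4 * (#{φ ∈ G.partialListColorings L S | ¬ ∀ u ∈ S, G.Adj v u → φ u ≠ c} : ℝ) ≤
      #(G.partialListColorings L S) := by
  set T := {u ∈ S | G.Adj v u ∧ c ∈ L u}
  have hT : (#T : ℝ) ≤ D := by
    refine le_trans ?_ hdeg
    gcongr
    intro u hu
    simp only [T, mem_filter, mem_neighborFinset] at hu ⊢
    exact hu.2
  refine le_of_mul_le_mul_left ?_ hD
  calc D * (4 * (#{φ ∈ G.partialListColorings L S | ¬ ∀ u ∈ S, G.Adj v u → φ u ≠ c} : ℝ))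
      ≤ ∑ u ∈ T, 4 * D * (#{φ ∈ G.partialListColorings L S | φ u = c} : ℝ) := by
        rw [← mul_sum, mul_left_comm, mul_assoc]
        gcongr
        exact_mod_cast card_filter_not_forall_le_sum S v c
    _ ≤ ∑ u ∈ T, 4 * D * (#(G.partialListColorings L (S.erase u)) : ℝ) := by
        refine sum_le_sum fun u _ => mul_le_mul_of_nonneg_left ?_ (by positivity)
        exact_mod_cast card_filter_apply_eq_le_card_partialListColorings_erase S u c
    _ ≤ ∑ u ∈ T, (#(G.partialListColorings L S) : ℝ) :=
        sum_le_sum fun u hu => hS u (mem_filter.1 hu).1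
    _ ≤ D * #(G.partialListColorings L S) := by
        rw [sum_const, nsmul_eq_mul]
        gcongr

section ColorDegree

variable {D : ℝ} (hD : 0 < D) (hL : ∀ v, 8 * D ≤ (#(L v) : ℝ))
  (hdeg : ∀ v, ∀ c ∈ L v, (#{u ∈ G.neighborFinset v | c ∈ L u} : ℝ) ≤ D)
include hD hL hdeg

theorem card_partialListColorings_insert_ge (S : Finset V) {v : V} (hv : v ∉ S) :
    (#(L v) : ℝ) / 2 * #(G.partialListColorings L S) ≤
      #(G.partialListColorings L (insert v S)) := by
  induction S using Finset.strongInduction generalizing v with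
  | H S ih =>
  have hS : ∀ u ∈ S, 4 * D * #(G.partialListColorings L (S.erase u)) ≤
      (#(G.partialListColorings L S) : ℝ) := fun u hu => by
    have := ih (S.erase u) (erase_ssubset hu) (notMem_erase u S)
    rw [insert_erase hu] at this
    nlinarith [hL u, (#(G.partialListColorings L (S.erase u))).cast_nonneg (α := ℝ)]
  have hfree : ∀ c ∈ L v, (#(G.partialListColorings L S) : ℝ) / 2 ≤
      #{φ ∈ G.partialListColorings L S | ∀ u ∈ S, G.Adj v u → φ u ≠ c} := fun c hc => by
    have hbad := four_mul_card_filter_not_forall_le hD (hdeg v c hc) hS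
    have hsplit := card_filter_add_card_filter_not (s := G.partialListColorings L S)
      (fun φ => ∀ u ∈ S, G.Adj v u → φ u ≠ c)
    rw [← hsplit, Nat.cast_add] at hbad ⊢
    linarith
  calc (#(L v) : ℝ) / 2 * #(G.partialListColorings L S)
      = ∑ c ∈ L v, (#(G.partialListColorings L S) : ℝ) / 2 := by
        rw [sum_const, nsmul_eq_mul]; ring
    _ ≤ ∑ c ∈ L v, (#{φ ∈ G.partialListColorings L S | ∀ u ∈ S, G.Adj v u → φ u ≠ c} : ℝ) :=
        sum_le_sum hfree
    _ ≤ #(G.partialListColorings L (insert v S)) := by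
        exact_mod_cast sum_card_filter_le_card_partialListColorings_insert hv

theorem partialListColorings_nonempty (S : Finset V) : (G.partialListColorings L S).Nonempty := by
  induction S using Finset.induction_on with
  | empty => simp [partialListColorings_empty]
  | insert v S hv ih =>
    have hLv : (0 : ℝ) < #(L v) := by linarith [hL v]
    rw [← card_pos, ← Nat.cast_pos (α := ℝ)] at ih ⊢
    exact (by positivity : (0 : ℝ) < #(L v) / 2 * _).trans_le
      (card_partialListColorings_insert_ge hD hL hdeg S hv)

end ColorDegree

end SimpleGraph

/-- **Reed's finishing lemma.**  If `L` is a list assignment for a graph `G` with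
`|L(v)| ≥ 8D` for every vertex `v` and maximum color degree `Δ(G, L) ≤ D` for a
positive real `D`, then `G` is `L`-colorable. -/
theorem reed_finishing_lemma (V : Type) [Fintype V] [DecidableEq V]
    (G : SimpleGraph V) [DecidableRel G.Adj] (L : V → Finset ℕ) (D : ℝ) (hD : 0 < D)
    (hL : ∀ v, 8 * D ≤ ((L v).card : ℝ))
    (hdeg : ∀ v, ∀ c ∈ L v,
      ((((G.neighborFinset v).filter fun u => c ∈ L u).card : ℝ) ≤ D)) :
    ∃ φ : V → ℕ, (∀ v, φ v ∈ L v) ∧ ∀ u v, G.Adj u v → φ u ≠ φ v := by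
  obtain ⟨φ, hφ⟩ := SimpleGraph.partialListColorings_nonempty hD hL hdeg univ
  obtain ⟨hφL, -, hproper⟩ := SimpleGraph.mem_partialListColorings.1 hφ
  exact ⟨φ, fun v => hφL v (mem_univ v), fun u v => hproper u (mem_univ u) v (mem_univ v)⟩
end

section
/- Let G be a graph with correspondence assignment (L, M) and let D be a positive real. If |L(v)| ≥ 8D for every v ∈ V(G) and Δ(G, (L, M)) ≤ D, then G is (L, M)-colorable. -/
/-!
Count the proper partial colorings. If `C(S)` denotes the set of proper colorings of a vertex set
`S`, then adding a vertex `v` multiplies `|C(S)|` by at least `|L(v)| / 2`. Indeed, by induction,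
for each of the at most `D` vertices `u ∈ S` that conflict with a color `c ∈ L(v)`, at most
`|C(S - u)| ≤ |C(S)| / (4D)` colorings of `S` use at `u` the unique color matched to `(v, c)`,
so `c` extends at least `3/4` of `C(S)`. Hence `C(V(G))` is nonempty.
-/

open Finset

section PartialColorings

variable {V : Type*} [Fintype V] [DecidableEq V] (G : SimpleGraph V) (L : V → Finset ℕ)
  (M : V × ℕ → V × ℕ → Prop)

open Classical

/-- A coloring of `S` is encoded as a function on all of `V` vanishing off `S`, so that the
colorings of `S` form a `Finset`. -/
noncomputable def partialColorings (S : Finset V) : Finset (V → ℕ) :=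
  (Fintype.piFinset fun v => if v ∈ S then L v else {0}).filter
    fun φ => ∀ u ∈ S, ∀ w ∈ S, G.Adj u w → ¬ M (u, φ u) (w, φ w)

variable {G L M}

theorem mem_partialColorings {S : Finset V} {φ : V → ℕ} :
    φ ∈ partialColorings G L M S ↔ (∀ v ∈ S, φ v ∈ L v) ∧ (∀ v ∉ S, φ v = 0) ∧
      ∀ u ∈ S, ∀ w ∈ S, G.Adj u w → ¬ M (u, φ u) (w, φ w) := by
  rw [partialColorings, mem_filter, Fintype.mem_piFinset, ← and_assoc]
  refine and_congr_left fun _ => ⟨fun h => ⟨fun v hv => ?_, fun v hv => ?_⟩, fun h v => ?_⟩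
  · simpa [hv] using h v
  · simpa [hv] using h v
  · split_ifs with hv
    exacts [h.1 v hv, by simpa using h.2 v hv]

theorem update_mem_partialColorings_insert (hMsymm : ∀ q r, M q r → M r q)
    {S : Finset V} {φ : V → ℕ} (hφ : φ ∈ partialColorings G L M S) {v : V} {c : ℕ}
    (hc : c ∈ L v) (hfree : ¬ ∃ u ∈ S, M (v, c) (u, φ u)) :
    Function.update φ v c ∈ partialColorings G L M (insert v S) := by
  obtain ⟨hcol, hzero, hproper⟩ := mem_partialColorings.mp hφ
  refine mem_partialColorings.mpr ⟨fun w hw => ?_, fun w hw => ?_, fun u hu w hw hadj => ?_⟩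
  · rcases eq_or_ne w v with rfl | hwv
    · simpa using hc
    · rw [Function.update_of_ne hwv]
      exact hcol w ((mem_insert.mp hw).resolve_left hwv)
  · rw [mem_insert, not_or] at hw
    rw [Function.update_of_ne hw.1]
    exact hzero w hw.2
  intro hM
  rcases eq_or_ne u v with rfl | huv
  · have hwu : w ≠ u := (G.ne_of_adj hadj).symm
    rw [Function.update_self, Function.update_of_ne hwu] at hM
    exact hfree ⟨w, (mem_insert.mp hw).resolve_left hwu, hM⟩
  rcases eq_or_ne w v with rfl | hwv
  · rw [Function.update_self, Function.update_of_ne huv] at hM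
    exact hfree ⟨u, (mem_insert.mp hu).resolve_left huv, hMsymm _ _ hM⟩
  rw [Function.update_of_ne huv, Function.update_of_ne hwv] at hM
  exact hproper u ((mem_insert.mp hu).resolve_left huv) w ((mem_insert.mp hw).resolve_left hwv)
    hadj hM

theorem update_zero_mem_partialColorings_erase {S : Finset V} {φ : V → ℕ}
    (hφ : φ ∈ partialColorings G L M S) (u : V) :
    Function.update φ u 0 ∈ partialColorings G L M (S.erase u) := by
  obtain ⟨hcol, hzero, hproper⟩ := mem_partialColorings.mp hφ
  refine mem_partialColorings.mpr ⟨fun w hw => ?_, fun w hw => ?_, fun a ha b hb hadj => ?_⟩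
  · rw [Function.update_of_ne (ne_of_mem_erase hw)]
    exact hcol w (mem_of_mem_erase hw)
  · rcases eq_or_ne w u with rfl | hwu
    · exact Function.update_self ..
    · rw [Function.update_of_ne hwu]
      exact hzero w fun h => hw (mem_erase.mpr ⟨hwu, h⟩)
  · rw [Function.update_of_ne (ne_of_mem_erase ha), Function.update_of_ne (ne_of_mem_erase hb)]
    exact hproper a (mem_of_mem_erase ha) b (mem_of_mem_erase hb) hadj

theorem sum_card_free_le_card_insert (hMsymm : ∀ q r, M q r → M r q) {S : Finset V} {v : V}
    (hv : v ∉ S) :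
    ∑ c ∈ L v, #{φ ∈ partialColorings G L M S | ¬ ∃ u ∈ S, M (v, c) (u, φ u)} ≤
      #(partialColorings G L M (insert v S)) := by
  rw [← card_sigma]
  refine card_le_card_of_injOn (fun p => Function.update p.2 v p.1) (fun p hp => ?_) ?_
  · rw [mem_coe, mem_sigma, mem_filter] at hp
    exact update_mem_partialColorings_insert hMsymm hp.2.1 hp.1 hp.2.2
  rintro ⟨c, φ⟩ hφ ⟨c', ψ⟩ hψ h
  simp only [coe_sigma, Set.mem_sigma_iff, mem_coe, mem_filter] at hφ hψ h
  have hφv := (mem_partialColorings.mp hφ.2.1).2.1 v hv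
  have hψv := (mem_partialColorings.mp hψ.2.1).2.1 v hv
  have hcc' : c = c' := by simpa using congrFun h v
  subst hcc'
  simp only [Sigma.mk.injEq, heq_eq_eq, true_and]
  funext w
  rcases eq_or_ne w v with rfl | hwv
  · rw [hφv, hψv]
  · simpa [hwv] using congrFun h w

theorem card_filter_matched_le_card_erase
    (hMmatch : ∀ q r r', M q r → M q r' → r.1 = r'.1 → r.2 = r'.2) (S : Finset V) (q : V × ℕ)
    (u : V) :
    #{φ ∈ partialColorings G L M S | M q (u, φ u)} ≤ #(partialColorings G L M (S.erase u)) := by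
  refine card_le_card_of_injOn (Function.update · u 0)
    (fun φ hφ => update_zero_mem_partialColorings_erase (mem_filter.mp hφ).1 u) ?_
  intro φ hφ ψ hψ h
  rw [mem_coe, mem_filter] at hφ hψ
  funext w
  rcases eq_or_ne w u with rfl | hwu
  · -- `M` matches `q` to at most one color at `u`
    exact hMmatch q _ _ hφ.2 hψ.2 rfl
  · simpa [hwu] using congrFun h w


theorem card_conflicting_le (hMmatch : ∀ q r r', M q r → M q r' → r.1 = r'.1 → r.2 = r'.2)
    {S : Finset V} {v : V} {c : ℕ} {D : ℝ} (hD : 0 < D) (N : Finset V)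
    (hN : ∀ u c', M (v, c) (u, c') → u ∈ N) (hNcard : (#N : ℝ) ≤ D)
    (hgrowth : ∀ u ∈ S,
      4 * D * #(partialColorings G L M (S.erase u)) ≤ (#(partialColorings G L M S) : ℝ)) :
    4 * (#{φ ∈ partialColorings G L M S | ∃ u ∈ S, M (v, c) (u, φ u)} : ℝ) ≤
      #(partialColorings G L M S) := by
  set A := partialColorings G L M S
  have hcover : {φ ∈ A | ∃ u ∈ S, M (v, c) (u, φ u)} ⊆
      (S ∩ N).biUnion fun u => {φ ∈ A | M (v, c) (u, φ u)} := by
    intro φ hφ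
    obtain ⟨hφA, u, hu, hM⟩ := mem_filter.mp hφ
    exact mem_biUnion.mpr ⟨u, mem_inter.mpr ⟨hu, hN _ _ hM⟩, mem_filter.mpr ⟨hφA, hM⟩⟩
  have hbad : (#{φ ∈ A | ∃ u ∈ S, M (v, c) (u, φ u)} : ℝ) ≤
      ∑ u ∈ S ∩ N, (#(partialColorings G L M (S.erase u)) : ℝ) := by
    exact_mod_cast (card_le_card hcover).trans <| card_biUnion_le.trans <|
      sum_le_sum fun u _ => card_filter_matched_le_card_erase hMmatch S (v, c) u
  refine le_of_mul_le_mul_left ?_ hD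
  calc D * (4 * (#{φ ∈ A | ∃ u ∈ S, M (v, c) (u, φ u)} : ℝ))
      ≤ ∑ u ∈ S ∩ N, 4 * D * (#(partialColorings G L M (S.erase u)) : ℝ) := by
        rw [← mul_sum]
        linarith [mul_le_mul_of_nonneg_left hbad (by positivity : (0 : ℝ) ≤ 4 * D)]
    _ ≤ ∑ u ∈ S ∩ N, (#A : ℝ) := sum_le_sum fun u hu => hgrowth u (mem_inter.mp hu).1
    _ ≤ D * #A := by
        rw [sum_const, nsmul_eq_mul]
        exact mul_le_mul_of_nonneg_right
          ((Nat.cast_le.mpr (card_le_card inter_subset_right)).trans hNcard) (Nat.cast_nonneg _)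

theorem card_partialColorings_insert_ge (hMsymm : ∀ q r, M q r → M r q)
    (hMmatch : ∀ q r r', M q r → M q r' → r.1 = r'.1 → r.2 = r'.2) {D : ℝ} (hD : 0 < D)
    (hL : ∀ v, 8 * D ≤ (#(L v) : ℝ))
    (hconflict : ∀ v, ∀ c ∈ L v, ∃ N : Finset V, (#N : ℝ) ≤ D ∧ ∀ u c', M (v, c) (u, c') → u ∈ N)
    (S : Finset V) {v : V} (hv : v ∉ S) :
    (#(L v) : ℝ) / 2 * #(partialColorings G L M S) ≤ #(partialColorings G L M (insert v S)) := by
  induction S using Finset.strongInduction generalizing v with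
  | H S ih =>
  set A := partialColorings G L M S
  have hgrowth : ∀ u ∈ S, 4 * D * #(partialColorings G L M (S.erase u)) ≤ (#A : ℝ) := by
    intro u hu
    have hu' := ih _ (erase_ssubset hu) (notMem_erase u S)
    rw [insert_erase hu] at hu'
    calc 4 * D * _ ≤ (#(L u) : ℝ) / 2 * #(partialColorings G L M (S.erase u)) := by
          gcongr; linarith [hL u]
      _ ≤ _ := hu'
  have hfree : ∀ c ∈ L v, 3 / 4 * (#A : ℝ) ≤ #{φ ∈ A | ¬ ∃ u ∈ S, M (v, c) (u, φ u)} := by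
    intro c hc
    obtain ⟨N, hNcard, hN⟩ := hconflict v c hc
    have hbad := card_conflicting_le hMmatch hD N hN hNcard hgrowth
    have hsplit : (#{φ ∈ A | ∃ u ∈ S, M (v, c) (u, φ u)} : ℝ) +
        #{φ ∈ A | ¬ ∃ u ∈ S, M (v, c) (u, φ u)} = #A := by
      exact_mod_cast card_filter_add_card_filter_not _
    linarith
  calc (#(L v) : ℝ) / 2 * #A ≤ ∑ c ∈ L v, 3 / 4 * (#A : ℝ) := by
        rw [sum_const, nsmul_eq_mul]
        nlinarith [(#(L v)).cast_nonneg (α := ℝ), (#A).cast_nonneg (α := ℝ)]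
    _ ≤ ∑ c ∈ L v, (#{φ ∈ A | ¬ ∃ u ∈ S, M (v, c) (u, φ u)} : ℝ) := sum_le_sum hfree
    _ ≤ _ := by exact_mod_cast sum_card_free_le_card_insert hMsymm hv

theorem partialColorings_nonempty (hMsymm : ∀ q r, M q r → M r q)
    (hMmatch : ∀ q r r', M q r → M q r' → r.1 = r'.1 → r.2 = r'.2) {D : ℝ} (hD : 0 < D)
    (hL : ∀ v, 8 * D ≤ (#(L v) : ℝ))
    (hconflict : ∀ v, ∀ c ∈ L v, ∃ N : Finset V, (#N : ℝ) ≤ D ∧ ∀ u c', M (v, c) (u, c') → u ∈ N)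
    (S : Finset V) : (partialColorings G L M S).Nonempty := by
  induction S using Finset.induction_on with
  | empty => exact ⟨0, mem_partialColorings.mpr ⟨by simp, fun _ _ => rfl, by simp⟩⟩
  | insert v S hv ih =>
    have hpos : 0 < (#(L v) : ℝ) / 2 * #(partialColorings G L M S) := by
      have hLv : (0 : ℝ) < #(L v) := by linarith [hL v]
      have hS : (0 : ℝ) < #(partialColorings G L M S) := by exact_mod_cast ih.card_pos
      positivity
    rw [← card_pos, ← Nat.cast_pos (α := ℝ)]
    exact hpos.trans_le (card_partialColorings_insert_ge hMsymm hMmatch hD hL hconflict S hv)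

end PartialColorings

/-- The matchings `M(e)` are encoded as one symmetric relation on pairs `(vertex, color)`. -/
theorem finishing_lemma_correspondence (V : Type) [Fintype V] [DecidableEq V]
    (G : SimpleGraph V) [DecidableRel G.Adj] (L : V → Finset ℕ)
    (M : V × ℕ → V × ℕ → Prop) [DecidableRel M] (D : ℝ) (hD : 0 < D)
    (hMsupp : ∀ q r, M q r → G.Adj q.1 r.1 ∧ q.2 ∈ L q.1 ∧ r.2 ∈ L r.1)
    (hMsymm : ∀ q r, M q r → M r q)
    (hMmatch : ∀ q r r', M q r → M q r' → r.1 = r'.1 → r.2 = r'.2)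
    (hL : ∀ v, 8 * D ≤ ((L v).card : ℝ))
    (hdeg : ∀ v, ∀ c ∈ L v,
      ((((G.neighborFinset v).filter fun u => ∃ c' ∈ L u, M (v, c) (u, c')).card : ℝ) ≤ D)) :
    ∃ φ : V → ℕ, (∀ v, φ v ∈ L v) ∧ ∀ u v, G.Adj u v → ¬ M (u, φ u) (v, φ v) := by
  have hconflict : ∀ v, ∀ c ∈ L v, ∃ N : Finset V, (#N : ℝ) ≤ D ∧
      ∀ u c', M (v, c) (u, c') → u ∈ N := fun v c hc => ⟨_, hdeg v c hc, fun u c' hM => by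
    obtain ⟨hadj, -, hc'⟩ := hMsupp _ _ hM
    exact mem_filter.mpr ⟨(G.mem_neighborFinset v u).mpr hadj, c', hc', hM⟩⟩
  obtain ⟨φ, hφ⟩ := partialColorings_nonempty (G := G) hMsymm hMmatch hD hL hconflict univ
  obtain ⟨hcol, -, hproper⟩ := mem_partialColorings.mp hφ
  exact ⟨φ, fun v => hcol v (mem_univ v),
    fun u v hadj => hproper u (mem_univ u) v (mem_univ v) hadj⟩
end

section
/- Under the standing setup (nearly disjoint finite graphs G₁, …, G_m with union G; every vertex of G in exactly C of the graphs; a list assignment L with |L(v)| = Λ for all v and d_{G_i, L}(v, c) = D for every i ∈ [m], v ∈ V(G_i), c ∈ L(v); and the random pair (A, ψ) where each vertex lies in A independently with probability p ∈ [0, 1] and ψ(v) is chosen uniformly and independently from L(v)), the following hold: (1) for every i ∈ [m], v ∈ V(G_i) and c ∈ L(v), the probability that no u ∈ N_{G_i}(v) ∩ A satisfies ψ(u) = c equals (1 − p/Λ)^D; and (2) for every v ∈ V(G) and c ∈ L(v), the probability that c ∈ L_{A,ψ}(v) equals (1 − p/Λ)^{DC}. -/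
/-!
Given `A`, the colours `ψ u` are independent, so the event that no `u ∈ T ∩ A` has `ψ u = c`
has probability `(1 - 1/Λ)^|T ∩ A|`; averaging over the independent membership of each `u ∈ T`
in `A` turns this into `((1 - p) + p (1 - 1/Λ))^|T| = (1 - p/Λ)^|T|`. Taking for `T` the
neighbours `u` of `v` with `c ∈ L u` gives `|T| = D` in a single `Gᵢ`. In the union, a common
neighbour `u` of `v` in two of the graphs would put both `u ≠ v` into both vertex sets, so by
near-disjointness the neighbourhoods of `v` in the `C` graphs containing it are disjoint and
`|T| = DC`.
-/

open Finset

/-- The weight of an outcome `(A, ψ)` in the product space where each vertex lies in `A`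
independently with probability `p` and colors are chosen uniformly from the lists. -/
noncomputable def outcomeWeight {V : Type} [Fintype V] [DecidableEq V]
    (L : V → Finset ℕ) (p : ℝ) (A : Finset V) : ℝ :=
  p ^ A.card * (1 - p) ^ (Fintype.card V - A.card) * ∏ v : V, ((L v).card : ℝ)⁻¹

open Classical in
/-- The probability of an event `E` of outcomes `(A, ψ)`, where `A ⊆ V` contains each
vertex independently with probability `p` and, independently, `ψ v` is uniform in `L v`. -/
noncomputable def prEvent {V : Type} [Fintype V] [DecidableEq V]
    (L : V → Finset ℕ) (p : ℝ) (E : Finset V → (V → ℕ) → Prop) : ℝ :=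
  ∑ A : Finset V, ∑ ψ ∈ Fintype.piFinset (fun v => L v),
    if E A ψ then outcomeWeight L p A else 0

open Classical in
/-- `L_{A,ψ}(v) = L(v) \ {ψ(u) : u ∈ N_G(v) ∩ A}`. -/
noncomputable def keptList {V : Type} [Fintype V] [DecidableEq V] (Gu : SimpleGraph V)
    (L : V → Finset ℕ) (A : Finset V) (ψ : V → ℕ) (v : V) : Finset ℕ :=
  (L v).filter fun c => ∀ u, Gu.Adj v u → u ∈ A → ψ u ≠ c

namespace KeepProbability

variable {V : Type} [Fintype V] [DecidableEq V]

lemma prEvent_congr (L : V → Finset ℕ) (p : ℝ) {E E' : Finset V → (V → ℕ) → Prop}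
    (h : ∀ A ψ, ψ ∈ Fintype.piFinset L → (E A ψ ↔ E' A ψ)) :
    prEvent L p E = prEvent L p E' := by
  classical
  unfold prEvent
  refine sum_congr rfl fun A _ => sum_congr rfl fun ψ hψ => ?_
  exact if_congr (h A ψ hψ) rfl rfl

lemma sum_inv_card_mul_ite_eq {α : Type*} [DecidableEq α] {s : Finset α} {c : α} (hc : c ∈ s) :
    ∑ x ∈ s, ((s.card : ℝ)⁻¹ * if x = c then 0 else 1) = 1 - (s.card : ℝ)⁻¹ := by
  rw [← add_sum_erase s _ hc, if_pos rfl, mul_zero, zero_add,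
    sum_congr rfl fun x hx => by rw [if_neg (ne_of_mem_erase hx), mul_one],
    sum_const, card_erase_of_mem hc, nsmul_eq_mul,
    Nat.cast_sub (card_pos.2 ⟨c, hc⟩), Nat.cast_one, sub_mul, one_mul,
    mul_inv_cancel₀ (Nat.cast_ne_zero.2 (card_pos.2 ⟨c, hc⟩).ne')]

lemma sum_piFinset_ite_forall_ne (L : V → Finset ℕ) (hL : ∀ v, (L v).Nonempty)
    (T : Finset V) (c : ℕ) (hc : ∀ u ∈ T, c ∈ L u) :
    ∑ ψ ∈ Fintype.piFinset L, (if ∀ u ∈ T, ψ u ≠ c then ∏ v, ((L v).card : ℝ)⁻¹ else 0)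
      = ∏ u ∈ T, (1 - ((L u).card : ℝ)⁻¹) := by
  have hfactor : ∀ ψ : V → ℕ,
      (if ∀ u ∈ T, ψ u ≠ c then ∏ v, ((L v).card : ℝ)⁻¹ else 0)
        = ∏ v, (((L v).card : ℝ)⁻¹ * if v ∈ T ∧ ψ v = c then 0 else 1) := by
    intro ψ
    split_ifs with hψ
    · refine prod_congr rfl fun v _ => ?_
      rw [if_neg fun h => hψ v h.1 h.2, mul_one]
    · obtain ⟨u, hu, hψu⟩ : ∃ u ∈ T, ψ u = c := by simpa using hψ
      exact (prod_eq_zero (mem_univ u) (by rw [if_pos ⟨hu, hψu⟩, mul_zero])).symm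
  have hsum : ∀ v, ∑ x ∈ L v, (((L v).card : ℝ)⁻¹ * if v ∈ T ∧ x = c then 0 else 1)
      = if v ∈ T then 1 - ((L v).card : ℝ)⁻¹ else 1 := by
    intro v
    split_ifs with hv
    · simp only [hv, true_and]
      exact sum_inv_card_mul_ite_eq (hc v hv)
    · simp only [hv, false_and, if_false, mul_one, sum_const, nsmul_eq_mul]
      exact mul_inv_cancel₀ (Nat.cast_ne_zero.2 (hL v).card_pos.ne')
  rw [sum_congr rfl fun ψ _ => hfactor ψ,
    ← prod_univ_sum L fun v x => ((L v).card : ℝ)⁻¹ * if v ∈ T ∧ x = c then 0 else 1,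
    prod_congr rfl fun v _ => hsum v, prod_ite_mem, univ_inter]

lemma sum_pow_mul_one_sub_pow_mul_prod (p : ℝ) (g : V → ℝ) :
    ∑ A : Finset V, p ^ A.card * (1 - p) ^ (Fintype.card V - A.card) * ∏ v ∈ A, g v
      = ∏ v, (p * g v + (1 - p)) := by
  rw [prod_add, powerset_univ]
  refine sum_congr rfl fun A _ => ?_
  rw [prod_mul_distrib, prod_const, prod_const, card_sdiff_of_subset (subset_univ A), card_univ]
  ring

theorem prEvent_forall_mem_ne (L : V → Finset ℕ) (hL : ∀ v, (L v).Nonempty) (p : ℝ)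
    (T : Finset V) (c : ℕ) (hc : ∀ u ∈ T, c ∈ L u) :
    prEvent L p (fun A ψ => ∀ u ∈ T, u ∈ A → ψ u ≠ c)
      = ∏ u ∈ T, (1 - p / ((L u).card : ℝ)) := by
  set g : V → ℝ := fun u => if u ∈ T then 1 - ((L u).card : ℝ)⁻¹ else 1
  have hcolour : ∀ A : Finset V,
      ∑ ψ ∈ Fintype.piFinset L, (if ∀ u ∈ T, u ∈ A → ψ u ≠ c then outcomeWeight L p A else 0)
        = p ^ A.card * (1 - p) ^ (Fintype.card V - A.card) * ∏ u ∈ A, g u := by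
    intro A
    have hevent : ∀ ψ : V → ℕ, (∀ u ∈ T, u ∈ A → ψ u ≠ c) ↔ ∀ u ∈ T ∩ A, ψ u ≠ c := by
      simp only [mem_inter, and_imp, implies_true]
    simp only [outcomeWeight, hevent, ← mul_ite_zero, ← mul_sum]
    rw [sum_piFinset_ite_forall_ne L hL (T ∩ A) c fun u hu => hc u (mem_inter.1 hu).1,
      prod_ite_mem, inter_comm]
  have hvertex : ∀ u, p * g u + (1 - p) = if u ∈ T then 1 - p / ((L u).card : ℝ) else 1 := by
    intro u
    simp only [g]
    split_ifs <;> ring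
  calc prEvent L p (fun A ψ => ∀ u ∈ T, u ∈ A → ψ u ≠ c)
      = ∑ A : Finset V, p ^ A.card * (1 - p) ^ (Fintype.card V - A.card) * ∏ u ∈ A, g u :=
        sum_congr rfl fun A _ => by convert hcolour A
    _ = ∏ u ∈ T, (1 - p / ((L u).card : ℝ)) := by
        rw [sum_pow_mul_one_sub_pow_mul_prod, prod_congr rfl fun u _ => hvertex u, prod_ite_mem,
          univ_inter]

theorem prEvent_forall_adj_ne (G : SimpleGraph V) [DecidableRel G.Adj] (L : V → Finset ℕ)
    (hL : ∀ v, (L v).Nonempty) (p : ℝ) (v : V) (c : ℕ) :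
    prEvent L p (fun A ψ => ∀ u, G.Adj v u → u ∈ A → ψ u ≠ c)
      = ∏ u ∈ (G.neighborFinset v).filter (c ∈ L ·), (1 - p / ((L u).card : ℝ)) := by
  rw [← prEvent_forall_mem_ne L hL p _ c fun u hu => (mem_filter.1 hu).2]
  refine prEvent_congr L p fun A ψ hψ => ?_
  simp only [mem_filter, SimpleGraph.mem_neighborFinset, and_imp]
  refine ⟨fun h u hvu _ => h u hvu, fun h u hvu hu hψu => h u hvu ?_ hu hψu⟩
  exact hψu ▸ Fintype.mem_piFinset.1 hψ u

lemma mem_keptList {G : SimpleGraph V} {L : V → Finset ℕ} {A : Finset V} {ψ : V → ℕ} {v : V}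
    {c : ℕ} : c ∈ keptList G L A ψ v ↔ c ∈ L v ∧ ∀ u, G.Adj v u → u ∈ A → ψ u ≠ c := by
  simp only [keptList, mem_filter]

section NearlyDisjoint

variable {ι : Type*} (G : ι → SimpleGraph V) [∀ i, DecidableRel (G i).Adj]
  (S : ι → Finset V) (hsupp : ∀ i u v, (G i).Adj u v → u ∈ S i ∧ v ∈ S i)
include hsupp

lemma neighborFinset_iSup_eq_biUnion [Fintype ι] [DecidableRel (⨆ i, G i).Adj] (v : V) :
    (⨆ i, G i).neighborFinset v
      = (univ.filter (v ∈ S ·)).biUnion fun i => (G i).neighborFinset v := by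
  ext u
  simp only [SimpleGraph.mem_neighborFinset, SimpleGraph.iSup_adj, mem_biUnion, mem_filter,
    mem_univ, true_and]
  exact ⟨fun ⟨i, h⟩ => ⟨i, (hsupp i v u h).1, h⟩, fun ⟨i, _, h⟩ => ⟨i, h⟩⟩

lemma disjoint_neighborFinset (hnd : ∀ i j, i ≠ j → (S i ∩ S j).card ≤ 1) {i j : ι}
    (hij : i ≠ j) (v : V) : Disjoint ((G i).neighborFinset v) ((G j).neighborFinset v) := by
  refine disjoint_left.2 fun u hui huj => ?_
  rw [SimpleGraph.mem_neighborFinset] at hui huj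
  exact (G i).ne_of_adj hui <| card_le_one.1 (hnd i j hij) v
    (mem_inter.2 ⟨(hsupp i v u hui).1, (hsupp j v u huj).1⟩) u
    (mem_inter.2 ⟨(hsupp i v u hui).2, (hsupp j v u huj).2⟩)

lemma card_filter_neighborFinset_iSup [Fintype ι] [DecidableRel (⨆ i, G i).Adj]
    (hnd : ∀ i j, i ≠ j → (S i ∩ S j).card ≤ 1) (v : V) (P : V → Prop) [DecidablePred P] :
    (((⨆ i, G i).neighborFinset v).filter P).card
      = ∑ i ∈ univ.filter (v ∈ S ·), (((G i).neighborFinset v).filter P).card := by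
  rw [neighborFinset_iSup_eq_biUnion G S hsupp, filter_biUnion, card_biUnion]
  exact fun i _ j _ hij =>
    (disjoint_neighborFinset G S hsupp hnd hij v).mono (filter_subset P _) (filter_subset P _)

end NearlyDisjoint

end KeepProbability

open KeepProbability in
theorem keep_probability_general (C Λ D : ℕ)
    (V : Type) [Fintype V] [DecidableEq V] (m : ℕ) (G : Fin m → SimpleGraph V)
    [∀ i, DecidableRel (G i).Adj] (S : Fin m → Finset V) (L : V → Finset ℕ) (p : ℝ)
    (hsupp : ∀ i u v, (G i).Adj u v → u ∈ S i ∧ v ∈ S i)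
    (hnd : ∀ i j, i ≠ j → (S i ∩ S j).card ≤ 1)
    (hcount : ∀ v : V, (univ.filter fun i => v ∈ S i).card = C)
    (hsize : ∀ v : V, (L v).card = Λ)
    (hdeg : ∀ i, ∀ v ∈ S i, ∀ c ∈ L v,
      (((G i).neighborFinset v).filter fun u => c ∈ L u).card = D) :
    (∀ i : Fin m, ∀ v ∈ S i, ∀ c ∈ L v,
      prEvent L p (fun A ψ => ∀ u, (G i).Adj v u → u ∈ A → ψ u ≠ c)
        = (1 - p / (Λ : ℝ)) ^ D) ∧
    (∀ v : V, ∀ c ∈ L v,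
      prEvent L p (fun A ψ => c ∈ keptList (⨆ i, G i) L A ψ v)
        = (1 - p / (Λ : ℝ)) ^ (D * C)) := by
  classical
  have hL : ∀ v, ∀ c ∈ L v, ∀ u, (L u).Nonempty := fun v c hc u =>
    card_pos.1 (by rw [hsize u, ← hsize v]; exact card_pos.2 ⟨c, hc⟩)
  have hconst : ∀ T : Finset V, ∏ u ∈ T, (1 - p / ((L u).card : ℝ)) = (1 - p / Λ) ^ T.card := by
    simp only [hsize, prod_const, implies_true]
  refine ⟨fun i v hv c hc => ?_, fun v c hc => ?_⟩
  · rw [prEvent_forall_adj_ne (G i) L (hL v c hc), hconst, hdeg i v hv c hc]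
  · rw [prEvent_congr L p fun A ψ _ => mem_keptList.trans (and_iff_right hc),
      prEvent_forall_adj_ne _ L (hL v c hc), hconst,
      card_filter_neighborFinset_iSup G S hsupp hnd, sum_congr rfl fun i hi =>
        hdeg i v (mem_filter.1 hi).2 c hc, sum_const, hcount v, smul_eq_mul, mul_comm]

/-- **Keep probabilities.**  Under the standing setup (nearly disjoint graphs `Gᵢ` with
vertex sets `S i`, every vertex in exactly `C` of them, all lists of size `Λ`, all color
degrees exactly `D`): (1) the probability that no activated neighbor `u ∈ N_{Gᵢ}(v) ∩ A`
has `ψ u = c` is `(1 - p/Λ)^D`; (2) the probability that `c ∈ L_{A,ψ}(v)` is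
`(1 - p/Λ)^{DC}`. -/
theorem keep_probability (C Λ D : ℕ) (hC : 0 < C) (hΛ : 0 < Λ) (hD : 0 < D)
    (V : Type) [Fintype V] [DecidableEq V] (m : ℕ) (G : Fin m → SimpleGraph V)
    [∀ i, DecidableRel (G i).Adj] (S : Fin m → Finset V) (L : V → Finset ℕ) (p : ℝ)
    (hp0 : 0 ≤ p) (hp1 : p ≤ 1)
    (hsupp : ∀ i u v, (G i).Adj u v → u ∈ S i ∧ v ∈ S i)
    (hnd : ∀ i j, i ≠ j → (S i ∩ S j).card ≤ 1)
    (hcount : ∀ v : V, (univ.filter fun i => v ∈ S i).card = C)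
    (hsize : ∀ v : V, (L v).card = Λ)
    (hdeg : ∀ i, ∀ v ∈ S i, ∀ c ∈ L v,
      (((G i).neighborFinset v).filter fun u => c ∈ L u).card = D) :
    (∀ i : Fin m, ∀ v ∈ S i, ∀ c ∈ L v,
      prEvent L p (fun A ψ => ∀ u, (G i).Adj v u → u ∈ A → ψ u ≠ c)
        = (1 - p / (Λ : ℝ)) ^ D) ∧
    (∀ v : V, ∀ c ∈ L v,
      prEvent L p (fun A ψ => c ∈ keptList (⨆ i, G i) L A ψ v)
        = (1 - p / (Λ : ℝ)) ^ (D * C)) :=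
  keep_probability_general C Λ D V m G S L p hsupp hnd hcount hsize hdeg
end

section
/- Under the standing setup (nearly disjoint finite graphs G₁, …, G_m with union G; every vertex of G in exactly C of the graphs; a list assignment L with |L(v)| = Λ for all v and d_{G_i, L}(v, c) = D for every i ∈ [m], v ∈ V(G_i), c ∈ L(v); and the random pair (A, ψ) where each vertex lies in A independently with probability p ∈ [0, 1] and ψ(v) is chosen uniformly and independently from L(v)), every vertex v ∈ V(G) satisfies E[R_v] = (1 − p/Λ)^{DC} Λ; moreover, for every i ∈ [m], v ∈ V(G_i) and c ∈ L(v), E[U_{v,c,i}] = p(1 − (1 − p/Λ)^{DC}) D and E[K_{v,c,i}] = (1 − p)(1 − p/Λ)^{D(C−1)} D. -/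
open Finset

open Classical in
/-- The expectation of a random variable `X` of outcomes `(A, ψ)`, where `A ⊆ V` contains
each vertex independently with probability `p` and, independently, `ψ v` is uniform in
`L v`. -/
noncomputable def expVal {V : Type} [Fintype V] [DecidableEq V]
    (L : V → Finset ℕ) (p : ℝ) (X : Finset V → (V → ℕ) → ℝ) : ℝ :=
  ∑ A : Finset V, ∑ ψ ∈ Fintype.piFinset (fun v => L v),
    X A ψ * (p ^ A.card * (1 - p) ^ (Fintype.card V - A.card) * ∏ v : V, ((L v).card : ℝ)⁻¹)

open Classical in
/-- `X_{A,ψ} = {v ∈ A : ψ(v) ∈ L_{A,ψ}(v)}`. -/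
noncomputable def keptSet {V : Type} [Fintype V] [DecidableEq V] (Gu : SimpleGraph V)
    (L : V → Finset ℕ) (A : Finset V) (ψ : V → ℕ) : Finset V :=
  A.filter fun v => ψ v ∈ keptList Gu L A ψ v

/-!
Under the product measure, the indicator of an event of the form "every vertex `u` satisfies a
condition on `(u ∈ A, ψ u)`" has expectation equal to the product over `u` of the probabilities
of these conditions. Each of `R_v`, `U_{v,c,i}`, `K_{v,c,i}` is a sum of such indicators: colour
`c` survives at `v` iff none of the neighbours `w` with `c ∈ L w` is activated with colour `c`,
which happens independently with probability `p/Λ` for each of them; `u ∈ X` iff `u` is activated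
with some colour `c'` (probability `p/Λ` each) that survives at `u`; and `K` counts inactive
neighbours `u` (probability `1 - p`) at which `c` is not taken by an outside neighbour. Near
disjointness makes the neighbourhoods of `v` in the graphs `Gᵢ ∋ v` disjoint, so the colour degree
of `v` in the union is `DC`, and exactly `D` of those neighbours lie in a given `V(Gᵢ) ∋ v`.
-/

lemma Fintype.prod_ite_mem_eq_mul_prod_compl {ι M : Type*} [Fintype ι] [DecidableEq ι]
    [CommMonoid M] (t : Finset ι) (f g : ι → M) :
    ∏ i, (if i ∈ t then f i else g i) = (∏ i ∈ t, f i) * ∏ i ∈ tᶜ, g i := by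
  rw [Finset.prod_ite]
  congr 2 <;> ext <;> simp

lemma Fintype.prod_eq_mul_prod_of_ne {ι M : Type*} [Fintype ι] [DecidableEq ι] [CommMonoid M]
    {f g : ι → M} (i : ι) (hg : g i = 1) (h : ∀ j, j ≠ i → f j = g j) :
    ∏ j, f j = f i * ∏ j, g j := by
  rw [Fintype.prod_eq_mul_prod_compl i f, Fintype.prod_eq_mul_prod_compl i g, hg, one_mul]
  exact congrArg _ (Finset.prod_congr rfl fun j hj => h j (by simpa using hj))

section ProductSpace

variable {V : Type} [Fintype V] [DecidableEq V] (L : V → Finset ℕ) (p : ℝ)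

lemma expVal_congr {X Y : Finset V → (V → ℕ) → ℝ}
    (h : ∀ A, ∀ ψ ∈ Fintype.piFinset L, X A ψ = Y A ψ) : expVal L p X = expVal L p Y :=
  sum_congr rfl fun A _ => sum_congr rfl fun ψ hψ => by rw [h A ψ hψ]

lemma expVal_sum {ι : Type*} (s : Finset ι) (X : ι → Finset V → (V → ℕ) → ℝ) :
    expVal L p (fun A ψ => ∑ i ∈ s, X i A ψ) = ∑ i ∈ s, expVal L p (X i) := by
  simp only [expVal, sum_mul]
  exact (sum_congr rfl fun _ _ => sum_comm).trans sum_comm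

lemma expVal_sub (X Y : Finset V → (V → ℕ) → ℝ) :
    expVal L p (fun A ψ => X A ψ - Y A ψ) = expVal L p X - expVal L p Y := by
  simp only [expVal, sub_mul, sum_sub_distrib]

lemma expVal_prod_ite (f g : V → ℕ → ℝ) :
    expVal L p (fun A ψ => ∏ u, if u ∈ A then f u (ψ u) else g u (ψ u)) =
      ∏ u, (p * ∑ x ∈ L u, f u x + (1 - p) * ∑ x ∈ L u, g u x) / #(L u) := by
  have hterm : ∀ (A : Finset V) (ψ : V → ℕ),
      (∏ u, if u ∈ A then f u (ψ u) else g u (ψ u)) *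
        (p ^ #A * (1 - p) ^ (Fintype.card V - #A) * ∏ u, (#(L u) : ℝ)⁻¹) =
      ∏ u, (if u ∈ A then p * f u (ψ u) / #(L u) else (1 - p) * g u (ψ u) / #(L u)) := by
    intro A ψ
    have hweight : p ^ #A * (1 - p) ^ (Fintype.card V - #A) = ∏ u, if u ∈ A then p else 1 - p := by
      rw [Fintype.prod_ite_mem_eq_mul_prod_compl, prod_const, prod_const, card_compl]
    rw [hweight, ← prod_mul_distrib, ← prod_mul_distrib]
    refine prod_congr rfl fun u _ => ?_
    split_ifs <;> ring
  calc _ = ∑ A : Finset V, ∏ u, ∑ x ∈ L u,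
          (if u ∈ A then p * f u x / #(L u) else (1 - p) * g u x / #(L u)) := by
        refine sum_congr rfl fun A _ => ?_
        rw [prod_univ_sum]
        exact sum_congr rfl fun ψ _ => hterm A ψ
    _ = ∑ A : Finset V, ∏ u, (if u ∈ A then p * (∑ x ∈ L u, f u x) / #(L u)
          else (1 - p) * (∑ x ∈ L u, g u x) / #(L u)) := by
        refine sum_congr rfl fun A _ => prod_congr rfl fun u _ => ?_
        split_ifs <;> rw [mul_sum, sum_div]
    _ = _ := by
        simp only [Fintype.prod_ite_mem_eq_mul_prod_compl, ← Fintype.prod_add, add_div]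

/-- The probability that a vertex with list `s` satisfies `P` on its colour if it is in `A`, and
`Q` otherwise. -/
noncomputable def vertexProb (p : ℝ) (s : Finset ℕ) (P Q : ℕ → Prop) [DecidablePred P]
    [DecidablePred Q] : ℝ :=
  (p * #{x ∈ s | P x} + (1 - p) * #{x ∈ s | Q x}) / #s

lemma expVal_ite_forall (P Q : V → ℕ → Prop) [∀ u, DecidablePred (P u)]
    [∀ u, DecidablePred (Q u)] :
    expVal L p (fun A ψ => if ∀ u, if u ∈ A then P u (ψ u) else Q u (ψ u) then 1 else 0) =
      ∏ u, vertexProb p (L u) (P u) (Q u) := by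
  have hind : ∀ (A : Finset V) (ψ : V → ℕ),
      (if ∀ u, if u ∈ A then P u (ψ u) else Q u (ψ u) then (1 : ℝ) else 0) =
        ∏ u, if u ∈ A then (if P u (ψ u) then 1 else 0) else (if Q u (ψ u) then 1 else 0) := by
    intro A ψ
    rw [← prod_const_one, ← Fintype.prod_ite_zero]
    exact prod_congr rfl fun u _ => by split_ifs <;> simp_all
  rw [expVal_congr L p fun A ψ _ => hind A ψ,
    expVal_prod_ite L p (fun u x => if P u x then 1 else 0) (fun u x => if Q u x then 1 else 0)]
  simp only [vertexProb, sum_boole]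

lemma expVal_mem (hL : ∀ w, (L w).Nonempty) (u : V) :
    expVal L p (fun A _ => if u ∈ A then 1 else 0) = p := by
  rw [(expVal_congr L p fun A ψ _ => ?_).trans
      (expVal_ite_forall L p (fun _ _ => True) (fun w _ => w ≠ u)),
    Fintype.prod_eq_single u fun w hw => ?_]
  · simp [vertexProb, (hL u).card_pos.ne']
  · have := (hL w).card_pos.ne'
    simp only [vertexProb, filter_const, if_pos hw, if_true]
    field_simp
    ring
  · by_cases hu : u ∈ A
    · rw [if_pos hu, if_pos fun w => ?_]
      split_ifs with hw
      exact fun h => hw (h ▸ hu)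
    · rw [if_neg hu, if_neg fun h => ?_]
      simpa [hu] using h u

lemma expVal_card_filter_and (s : Finset V) (P : V → Prop) [DecidablePred P]
    (E : Finset V → (V → ℕ) → V → Prop) [∀ A ψ, DecidablePred (E A ψ)] {q : ℝ}
    (h : ∀ u ∈ s, P u → expVal L p (fun A ψ => if E A ψ u then 1 else 0) = q) :
    expVal L p (fun A ψ => #{u ∈ s | P u ∧ E A ψ u}) = #{u ∈ s | P u} * q := by
  have hterm : ∀ u ∈ s, expVal L p (fun A ψ => if P u ∧ E A ψ u then 1 else 0) =
      if P u then q else 0 := by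
    intro u hu
    by_cases hP : P u
    · simp only [hP, true_and, if_true, h u hu hP]
    · simp [hP, expVal]
  have hcount : ∀ (A : Finset V) (ψ : V → ℕ),
      (#{u ∈ s | P u ∧ E A ψ u} : ℝ) = ∑ u ∈ s, if P u ∧ E A ψ u then 1 else 0 := by
    intro A ψ
    rw [card_filter]
    push_cast
    rfl
  rw [expVal_congr L p fun A ψ _ => hcount A ψ, expVal_sum, sum_congr rfl hterm, ← sum_filter,
    sum_const, nsmul_eq_mul]

end ProductSpace

lemma vertexProb_avoid (p : ℝ) {s : Finset ℕ} {Λ : ℕ} (hs : #s = Λ) (hΛ : 0 < Λ) (Q : Prop)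
    [Decidable Q] (c : ℕ) :
    vertexProb p s (fun x => ¬(Q ∧ x = c)) (fun _ => True) =
      if Q ∧ c ∈ s then 1 - p / Λ else 1 := by
  have hΛ' : (Λ : ℝ) ≠ 0 := by positivity
  by_cases h : Q ∧ c ∈ s
  · have hcard : (#{x ∈ s | ¬(Q ∧ x = c)} : ℝ) = Λ - 1 := by
      simp only [h.1, true_and, filter_ne', card_erase_of_mem h.2, hs]
      rw [Nat.cast_pred hΛ]
    simp only [vertexProb, hcard, filter_const, if_true, hs, if_pos h]
    field_simp
    ring
  · have hfilter : {x ∈ s | ¬(Q ∧ x = c)} = s :=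
      filter_true_of_mem fun x hx hQx => h ⟨hQx.1, hQx.2 ▸ hx⟩
    simp only [vertexProb, hfilter, filter_const, if_true, hs, if_neg h]
    field_simp
    ring

lemma eq_and_mem_keptSet_iff {V : Type} [Fintype V] [DecidableEq V] {G : SimpleGraph V}
    {L : V → Finset ℕ} {A : Finset V} {ψ : V → ℕ} {u : V} (hψu : ψ u ∈ L u) {c : ℕ} :
    ψ u = c ∧ u ∈ keptSet G L A ψ ↔
      ∀ w, if w ∈ A then (w = u → ψ w = c) ∧ ¬(G.Adj u w ∧ ψ w = c) else w ≠ u := by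
  classical
  rw [keptSet, mem_filter, keptList, mem_filter]
  refine ⟨?_, fun h => ?_⟩
  · rintro ⟨rfl, huA, -, hfree⟩ w
    split_ifs with hwA
    · exact ⟨fun h => h ▸ rfl, fun h => hfree w h.1 hwA h.2⟩
    · rintro rfl
      exact hwA huA
  · have huA : u ∈ A := by
      by_contra huA
      simpa [huA] using h u
    have hc : ψ u = c := by simpa [huA] using h u
    refine ⟨hc, huA, hψu, fun w hadj hwA heq => ?_⟩
    simpa [hwA, hadj, heq.trans hc] using h w

open Classical in
/-- The colour degree `d_{G,L}(v, c)`. -/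
noncomputable def colorDeg {V : Type} [Fintype V] (G : SimpleGraph V) (L : V → Finset ℕ) (v : V)
    (c : ℕ) : ℕ :=
  #{w | G.Adj v w ∧ c ∈ L w}

section Indicators

variable {V : Type} [Fintype V] [DecidableEq V] (L : V → Finset ℕ) (p : ℝ) {Λ : ℕ}
  (hsize : ∀ w, #(L w) = Λ) (hΛ : 0 < Λ)
include hsize hΛ

omit [DecidableEq V] in
lemma prod_vertexProb_avoid (Q : V → Prop) [DecidablePred Q] (c : ℕ) :
    ∏ w, vertexProb p (L w) (fun x => ¬(Q w ∧ x = c)) (fun _ => True) =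
      (1 - p / Λ) ^ #{w | Q w ∧ c ∈ L w} := by
  simp only [vertexProb_avoid p (hsize _) hΛ]
  rw [prod_ite, prod_const, prod_const_one, mul_one]

lemma expVal_card_keptList (G : SimpleGraph V) (v : V) :
    expVal L p (fun A ψ => #(keptList G L A ψ v)) =
      ∑ c ∈ L v, (1 - p / Λ) ^ colorDeg G L v c := by
  classical
  have hind : ∀ A ψ, (#(keptList G L A ψ v) : ℝ) =
      ∑ c ∈ L v, if ∀ u, if u ∈ A then ¬(G.Adj v u ∧ ψ u = c) else True then 1 else 0 := by
    intro A ψ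
    rw [keptList, card_filter, Nat.cast_sum]
    refine sum_congr rfl fun c _ => ?_
    rw [Nat.cast_ite, Nat.cast_one, Nat.cast_zero]
    refine if_congr ⟨fun h u => ?_, fun h u huv huA hψ => ?_⟩ rfl rfl
    · split_ifs with huA
      exact fun h' => h u h'.1 huA h'.2
    · simpa [huA, huv, hψ] using h u
  rw [expVal_congr L p fun A ψ _ => hind A ψ, expVal_sum]
  refine sum_congr rfl fun c _ => ?_
  rw [expVal_ite_forall L p (fun u x => ¬(G.Adj v u ∧ x = c)) (fun _ _ => True),
    prod_vertexProb_avoid L p hsize hΛ]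
  rfl

lemma expVal_mem_keptSet (G : SimpleGraph V) (u : V) :
    expVal L p (fun A ψ => if u ∈ keptSet G L A ψ then 1 else 0) =
      p / Λ * ∑ c ∈ L u, (1 - p / Λ) ^ colorDeg G L u c := by
  classical
  have hind : ∀ A, ∀ ψ ∈ Fintype.piFinset L, (if u ∈ keptSet G L A ψ then (1 : ℝ) else 0) =
      ∑ c ∈ L u, if ∀ w, if w ∈ A then (w = u → ψ w = c) ∧ ¬(G.Adj u w ∧ ψ w = c)
        else w ≠ u then 1 else 0 := by
    intro A ψ hψ
    have hψu : ψ u ∈ L u := Fintype.mem_piFinset.1 hψ u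
    calc (if u ∈ keptSet G L A ψ then (1 : ℝ) else 0)
        = ∑ c ∈ L u, if ψ u = c ∧ u ∈ keptSet G L A ψ then 1 else 0 := by
          simp only [ite_and]
          rw [sum_ite_eq, if_pos hψu]
      _ = _ := sum_congr rfl fun c _ => if_congr (eq_and_mem_keptSet_iff hψu) rfl rfl
  rw [expVal_congr L p hind, expVal_sum, mul_sum]
  refine sum_congr rfl fun c hc => ?_
  rw [expVal_ite_forall L p (fun w x => (w = u → x = c) ∧ ¬(G.Adj u w ∧ x = c))
    (fun w _ => w ≠ u), Fintype.prod_eq_mul_prod_of_ne u (g := fun w =>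
      vertexProb p (L w) (fun x => ¬(G.Adj u w ∧ x = c)) (fun _ => True)) ?_ ?_,
    prod_vertexProb_avoid L p hsize hΛ]
  · congr 1
    simp [vertexProb, filter_eq', hc, hsize]
  · rw [vertexProb_avoid p (hsize u) hΛ, if_neg fun h => h.1.ne rfl]
  · intro w hw
    simp [hw]

lemma expVal_mem_sdiff_keptSet (G : SimpleGraph V) (u : V) {N : ℕ}
    (hN : ∀ c ∈ L u, colorDeg G L u c = N) :
    expVal L p (fun A ψ => if u ∈ A ∧ u ∉ keptSet G L A ψ then 1 else 0) =
      p * (1 - (1 - p / Λ) ^ N) := by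
  have hL : ∀ w, (L w).Nonempty := fun w => card_pos.1 (hsize w ▸ hΛ)
  have hind : ∀ A ψ, (if u ∈ A ∧ u ∉ keptSet G L A ψ then (1 : ℝ) else 0) =
      (if u ∈ A then 1 else 0) - if u ∈ keptSet G L A ψ then 1 else 0 := by
    intro A ψ
    have hsub : keptSet G L A ψ ⊆ A := filter_subset _ _
    by_cases huA : u ∈ A <;> by_cases hu : u ∈ keptSet G L A ψ <;> simp_all [@hsub u]
  rw [expVal_congr L p fun A ψ _ => hind A ψ, expVal_sub, expVal_mem L p hL,
    expVal_mem_keptSet L p hsize hΛ, sum_congr rfl fun c hc => by rw [hN c hc], sum_const, hsize,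
    nsmul_eq_mul]
  field_simp

open Classical in
lemma expVal_not_mem_not_blocked (G : SimpleGraph V) (T : Finset V) (u : V) (c : ℕ) :
    expVal L p (fun A ψ =>
        if u ∉ A ∧ ¬∃ w, w ∈ A ∧ w ∉ T ∧ ψ w = c ∧ G.Adj w u then 1 else 0) =
      (1 - p) * (1 - p / Λ) ^ #{w | (w ∉ T ∧ G.Adj w u) ∧ c ∈ L w} := by
  have hind : ∀ (A : Finset V) (ψ : V → ℕ),
      (if u ∉ A ∧ ¬∃ w, w ∈ A ∧ w ∉ T ∧ ψ w = c ∧ G.Adj w u then (1 : ℝ) else 0) =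
        if ∀ w, if w ∈ A then w ≠ u ∧ ¬((w ∉ T ∧ G.Adj w u) ∧ ψ w = c) else True
        then 1 else 0 := by
    intro A ψ
    refine if_congr ⟨?_, fun h => ⟨fun huA => ?_, ?_⟩⟩ rfl rfl
    · rintro ⟨huA, hfree⟩ w
      split_ifs with hwA
      exact ⟨fun h => huA (h ▸ hwA), fun h => hfree ⟨w, hwA, h.1.1, h.2, h.1.2⟩⟩
    · simpa [huA] using h u
    · rintro ⟨w, hwA, hwT, hc, hadj⟩
      simpa [hwA, hwT, hc, hadj] using h w
  rw [expVal_congr L p fun A ψ _ => hind A ψ,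
    expVal_ite_forall L p (fun w x => w ≠ u ∧ ¬((w ∉ T ∧ G.Adj w u) ∧ x = c)) (fun _ _ => True),
    Fintype.prod_eq_mul_prod_of_ne u (g := fun w =>
      vertexProb p (L w) (fun x => ¬((w ∉ T ∧ G.Adj w u) ∧ x = c)) (fun _ => True)) ?_ ?_,
    prod_vertexProb_avoid L p hsize hΛ]
  · congr 1
    have := (card_pos.1 (hsize u ▸ hΛ)).card_pos.ne'
    simp [vertexProb, this]
  · rw [vertexProb_avoid p (hsize u) hΛ, if_neg fun h => h.1.2.ne rfl]
  · intro w hw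
    simp [hw]

end Indicators

section NearlyDisjoint

variable {V : Type} [Fintype V] [DecidableEq V] {m : ℕ} {G : Fin m → SimpleGraph V}
  {S : Fin m → Finset V} (hsupp : ∀ i u v, (G i).Adj u v → u ∈ S i ∧ v ∈ S i)
  (hnd : ∀ i j, i ≠ j → #(S i ∩ S j) ≤ 1)
include hsupp hnd

omit [Fintype V] in
lemma eq_of_adj_of_mem_of_mem {i j : Fin m} {u w : V} (hadj : (G j).Adj u w) (hu : u ∈ S i)
    (hw : w ∈ S i) : j = i := by
  by_contra hji
  have hsub : ({u, w} : Finset V) ⊆ S j ∩ S i := by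
    intro x hx
    rcases mem_insert.1 hx with rfl | hx
    · exact mem_inter.2 ⟨(hsupp j _ _ hadj).1, hu⟩
    · exact mem_inter.2 (mem_singleton.1 hx ▸ ⟨(hsupp j _ _ hadj).2, hw⟩)
  have := card_le_card hsub
  rw [card_pair hadj.ne] at this
  have := hnd j i hji
  omega

variable [∀ i, DecidableRel (G i).Adj] {L : V → Finset ℕ} {C D : ℕ}
  (hcount : ∀ v, #{i | v ∈ S i} = C)
  (hdeg : ∀ i, ∀ v ∈ S i, ∀ c ∈ L v, #{u ∈ (G i).neighborFinset v | c ∈ L u} = D)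
include hcount hdeg

lemma colorDeg_iSup {u : V} {c : ℕ} (hc : c ∈ L u) : colorDeg (⨆ i, G i) L u c = D * C := by
  classical
  have hunion : ({w | (⨆ i, G i).Adj u w ∧ c ∈ L w} : Finset V) =
      ({i | u ∈ S i} : Finset (Fin m)).biUnion fun i => {w ∈ (G i).neighborFinset u | c ∈ L w} := by
    ext w
    simp only [mem_filter, mem_univ, true_and, mem_biUnion, SimpleGraph.iSup_adj,
      SimpleGraph.mem_neighborFinset]
    constructor
    · rintro ⟨⟨j, hj⟩, hcw⟩
      exact ⟨j, (hsupp j u w hj).1, hj, hcw⟩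
    · rintro ⟨j, -, hj, hcw⟩
      exact ⟨⟨j, hj⟩, hcw⟩
  have hdisj : Set.PairwiseDisjoint ({i | u ∈ S i} : Finset (Fin m))
      fun i => {w ∈ (G i).neighborFinset u | c ∈ L w} := by
    intro i _ j _ hij
    refine disjoint_left.2 fun w hwi hwj => hij ?_
    simp only [mem_filter, SimpleGraph.mem_neighborFinset] at hwi hwj
    exact eq_of_adj_of_mem_of_mem hsupp hnd hwi.1 (hsupp j u w hwj.1).1 (hsupp j u w hwj.1).2
  rw [colorDeg, hunion, card_biUnion hdisj,
    sum_congr rfl fun i hi => hdeg i u (by simpa using hi) c hc, sum_const, hcount, smul_eq_mul,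
    mul_comm]

open Classical in
lemma card_not_mem_adj_iSup {i : Fin m} {u : V} (hu : u ∈ S i) {c : ℕ} (hc : c ∈ L u) :
    #{w | (w ∉ S i ∧ (⨆ j, G j).Adj w u) ∧ c ∈ L w} = D * (C - 1) := by
  have hin : #{w | ((⨆ j, G j).Adj u w ∧ c ∈ L w) ∧ w ∈ S i} = D := by
    rw [← hdeg i u hu c hc]
    congr 1
    ext w
    simp only [mem_filter, mem_univ, true_and, SimpleGraph.iSup_adj,
      SimpleGraph.mem_neighborFinset]
    constructor
    · rintro ⟨⟨⟨j, hj⟩, hcw⟩, hw⟩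
      exact ⟨eq_of_adj_of_mem_of_mem hsupp hnd hj hu hw ▸ hj, hcw⟩
    · rintro ⟨hi, hcw⟩
      exact ⟨⟨⟨i, hi⟩, hcw⟩, (hsupp i u w hi).2⟩
  have hout : #{w | (w ∉ S i ∧ (⨆ j, G j).Adj w u) ∧ c ∈ L w} =
      #{w | ((⨆ j, G j).Adj u w ∧ c ∈ L w) ∧ w ∉ S i} :=
    congrArg card (filter_congr fun w _ => by rw [SimpleGraph.adj_comm]; tauto)
  have hsplit := card_filter_add_card_filter_not
    (s := ({w | (⨆ j, G j).Adj u w ∧ c ∈ L w} : Finset V)) (p := (· ∈ S i))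
  rw [filter_filter, filter_filter, hin] at hsplit
  have htotal := colorDeg_iSup hsupp hnd hcount hdeg hc
  rw [colorDeg] at htotal
  rw [hout, Nat.mul_sub_one]
  omega

end NearlyDisjoint

open Classical in
theorem expectations_lemma_general (C Λ D : ℕ) (hΛ : 0 < Λ)
    (V : Type) [Fintype V] [DecidableEq V] (m : ℕ) (G : Fin m → SimpleGraph V)
    [∀ i, DecidableRel (G i).Adj] (S : Fin m → Finset V) (L : V → Finset ℕ) (p : ℝ)
    (hsupp : ∀ i u v, (G i).Adj u v → u ∈ S i ∧ v ∈ S i)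
    (hnd : ∀ i j, i ≠ j → (S i ∩ S j).card ≤ 1)
    (hcount : ∀ v : V, (univ.filter fun i => v ∈ S i).card = C)
    (hsize : ∀ v : V, (L v).card = Λ)
    (hdeg : ∀ i, ∀ v ∈ S i, ∀ c ∈ L v,
      (((G i).neighborFinset v).filter fun u => c ∈ L u).card = D) :
    -- `E[R_v] = (1 - p/Λ)^{DC} Λ`
    (∀ v : V,
      expVal L p (fun A ψ => ((keptList (⨆ i, G i) L A ψ v).card : ℝ))
        = (1 - p / (Λ : ℝ)) ^ (D * C) * Λ) ∧
    -- `E[U_{v,c,i}] = p (1 - (1 - p/Λ)^{DC}) D`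
    (∀ i : Fin m, ∀ v ∈ S i, ∀ c ∈ L v,
      expVal L p (fun A ψ =>
          ((((G i).neighborFinset v).filter fun u =>
              c ∈ L u ∧ u ∈ A ∧ u ∉ keptSet (⨆ j, G j) L A ψ).card : ℝ))
        = p * (1 - (1 - p / (Λ : ℝ)) ^ (D * C)) * D) ∧
    -- `E[K_{v,c,i}] = (1 - p)(1 - p/Λ)^{D(C-1)} D`
    (∀ i : Fin m, ∀ v ∈ S i, ∀ c ∈ L v,
      expVal L p (fun A ψ =>
          ((((G i).neighborFinset v).filter fun u =>
              c ∈ L u ∧ u ∉ A ∧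
                ¬∃ w, w ∈ A ∧ w ∉ S i ∧ ψ w = c ∧ (⨆ j, G j).Adj w u).card : ℝ))
        = (1 - p) * (1 - p / (Λ : ℝ)) ^ (D * (C - 1)) * D) := by
  have hdegU : ∀ u, ∀ c ∈ L u, colorDeg (⨆ i, G i) L u c = D * C :=
    fun u _ hc => colorDeg_iSup hsupp hnd hcount hdeg hc
  refine ⟨fun v => ?_, fun i v hv c hc => ?_, fun i v hv c hc => ?_⟩
  · rw [expVal_card_keptList L p hsize hΛ, sum_congr rfl fun c hc => by rw [hdegU v c hc],
      sum_const, hsize, nsmul_eq_mul, mul_comm]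
  · rw [expVal_card_filter_and L p _ _ _ fun u _ _ =>
      expVal_mem_sdiff_keptSet L p hsize hΛ _ u (hdegU u), hdeg i v hv c hc]
    ring
  · rw [expVal_card_filter_and L p _ _ _ (q := (1 - p) * (1 - p / Λ) ^ (D * (C - 1)))
      fun u hu hcu => ?_, hdeg i v hv c hc]
    · ring
    have huS := (hsupp i v u ((G i).mem_neighborFinset v u |>.1 hu)).2
    rw [expVal_not_mem_not_blocked L p hsize hΛ,
      card_not_mem_adj_iSup hsupp hnd hcount hdeg huS hcu]

open Classical in
/-- **Expectations of the key random variables.**  Under the standing setup (nearly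
disjoint graphs `Gᵢ` with vertex sets `S i`, every vertex in exactly `C` of them, all
lists of size `Λ`, all color degrees exactly `D`):
`E[R_v] = (1 - p/Λ)^{DC} Λ`, `E[U_{v,c,i}] = p(1 - (1 - p/Λ)^{DC})D` and
`E[K_{v,c,i}] = (1 - p)(1 - p/Λ)^{D(C-1)} D`. -/
theorem expectations_lemma (C Λ D : ℕ) (hC : 0 < C) (hΛ : 0 < Λ) (hD : 0 < D)
    (V : Type) [Fintype V] [DecidableEq V] (m : ℕ) (G : Fin m → SimpleGraph V)
    [∀ i, DecidableRel (G i).Adj] (S : Fin m → Finset V) (L : V → Finset ℕ) (p : ℝ)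
    (hp0 : 0 ≤ p) (hp1 : p ≤ 1)
    (hsupp : ∀ i u v, (G i).Adj u v → u ∈ S i ∧ v ∈ S i)
    (hnd : ∀ i j, i ≠ j → (S i ∩ S j).card ≤ 1)
    (hcount : ∀ v : V, (univ.filter fun i => v ∈ S i).card = C)
    (hsize : ∀ v : V, (L v).card = Λ)
    (hdeg : ∀ i, ∀ v ∈ S i, ∀ c ∈ L v,
      (((G i).neighborFinset v).filter fun u => c ∈ L u).card = D) :
    -- `E[R_v] = (1 - p/Λ)^{DC} Λ`
    (∀ v : V,
      expVal L p (fun A ψ => ((keptList (⨆ i, G i) L A ψ v).card : ℝ))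
        = (1 - p / (Λ : ℝ)) ^ (D * C) * Λ) ∧
    -- `E[U_{v,c,i}] = p (1 - (1 - p/Λ)^{DC}) D`
    (∀ i : Fin m, ∀ v ∈ S i, ∀ c ∈ L v,
      expVal L p (fun A ψ =>
          ((((G i).neighborFinset v).filter fun u =>
              c ∈ L u ∧ u ∈ A ∧ u ∉ keptSet (⨆ j, G j) L A ψ).card : ℝ))
        = p * (1 - (1 - p / (Λ : ℝ)) ^ (D * C)) * D) ∧
    -- `E[K_{v,c,i}] = (1 - p)(1 - p/Λ)^{D(C-1)} D`
    (∀ i : Fin m, ∀ v ∈ S i, ∀ c ∈ L v,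
      expVal L p (fun A ψ =>
          ((((G i).neighborFinset v).filter fun u =>
              c ∈ L u ∧ u ∉ A ∧
                ¬∃ w, w ∈ A ∧ w ∉ S i ∧ ψ w = c ∧ (⨆ j, G j).Adj w u).card : ℝ))
        = (1 - p) * (1 - p / (Λ : ℝ)) ^ (D * (C - 1)) * D) :=
  expectations_lemma_general C Λ D hΛ V m G S L p hsupp hnd hcount hsize hdeg
end

section
/- Let C, D be positive integers and let G₁, …, G_m be nearly disjoint graphs of maximum degree at most D such that each vertex v ∈ ⋃_{i=1}^m V(G_i) is contained in at most C of the graphs G₁, …, G_m. Then in the graph G := ⋃_{i=1}^m G_i, every two distinct vertices have at most D + C² common neighbors, and G has maximum degree at most CD. -/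
/-!
A common neighbor `w` of `u ≠ v` either comes from a single `Gᵢ` containing both `u` and `v`,
or is joined to `u` in some `Gᵢ` and to `v` in some `Gⱼ` with `i ≠ j`. By near disjointness
at most one `Gᵢ` contains both `u` and `v`, so there are at most `D` common neighbors of the
first kind; a common neighbor of the second kind lies in `V(Gᵢ) ∩ V(Gⱼ)`, which has at most one
vertex, and there are at most `C²` choices of `(i, j)` with `u ∈ V(Gᵢ)` and `v ∈ V(Gⱼ)`.
The degree bound is the same count: `v` lies in at most `C` graphs, each contributing at most
`D` neighbors.
-/

open Finset

section NearlyDisjoint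

variable {ι V : Type*} {G : ι → SimpleGraph V} {S : ι → Finset V}

theorem eq_of_mem_of_mem_of_card_inter_le_one [DecidableEq V]
    (hnd : ∀ i j, i ≠ j → #(S i ∩ S j) ≤ 1) {u v : V} (huv : u ≠ v) {i j : ι}
    (hui : u ∈ S i) (hvi : v ∈ S i) (huj : u ∈ S j) (hvj : v ∈ S j) : i = j := by
  by_contra hij
  have hlt : 1 < #(S i ∩ S j) :=
    one_lt_card.mpr ⟨u, mem_inter.mpr ⟨hui, huj⟩, v, mem_inter.mpr ⟨hvi, hvj⟩, huv⟩
  exact (hnd i j hij).not_gt hlt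

variable [Fintype V] [DecidableEq V] [∀ i, DecidableRel (G i).Adj]

theorem card_filter_exists_adj_le_card_mul [Fintype ι] {D : ℕ}
    (hsupp : ∀ i u v, (G i).Adj u v → u ∈ S i ∧ v ∈ S i) (hdeg : ∀ i v, (G i).degree v ≤ D)
    (v : V) : #(univ.filter fun w => ∃ i, (G i).Adj v w) ≤ #(univ.filter fun i => v ∈ S i) * D := by
  have hsub : (univ.filter fun w => ∃ i, (G i).Adj v w) ⊆
      (univ.filter fun i => v ∈ S i).biUnion fun i => (G i).neighborFinset v := by
    intro w hw
    obtain ⟨i, hi⟩ := (mem_filter.mp hw).2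
    exact mem_biUnion.mpr ⟨i, mem_filter.mpr ⟨mem_univ i, (hsupp i v w hi).1⟩,
      (SimpleGraph.mem_neighborFinset _ _ _).mpr hi⟩
  refine (card_le_card hsub).trans (card_biUnion_le_card_mul _ _ _ fun i _ => ?_)
  rw [SimpleGraph.card_neighborFinset_eq_degree]
  exact hdeg i v

theorem card_filter_adj_adj_same_le [Fintype ι] {D : ℕ}
    (hsupp : ∀ i u v, (G i).Adj u v → u ∈ S i ∧ v ∈ S i)
    (hnd : ∀ i j, i ≠ j → #(S i ∩ S j) ≤ 1) (hdeg : ∀ i v, (G i).degree v ≤ D)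
    {u v : V} (huv : u ≠ v) :
    #(univ.filter fun w => ∃ i, (G i).Adj u w ∧ (G i).Adj v w) ≤ D := by
  by_cases hex : ∃ i w, (G i).Adj u w ∧ (G i).Adj v w
  · obtain ⟨i₀, w₀, hu₀, hv₀⟩ := hex
    have hsub : (univ.filter fun w => ∃ i, (G i).Adj u w ∧ (G i).Adj v w) ⊆
        (G i₀).neighborFinset u := by
      intro w hw
      obtain ⟨i, hui, hvi⟩ := (mem_filter.mp hw).2
      have hi : i = i₀ := eq_of_mem_of_mem_of_card_inter_le_one hnd huv
        (hsupp i u w hui).1 (hsupp i v w hvi).1 (hsupp i₀ u w₀ hu₀).1 (hsupp i₀ v w₀ hv₀).1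
      exact (SimpleGraph.mem_neighborFinset _ _ _).mpr (hi ▸ hui)
    calc _ ≤ #((G i₀).neighborFinset u) := card_le_card hsub
      _ = (G i₀).degree u := SimpleGraph.card_neighborFinset_eq_degree _ _
      _ ≤ D := hdeg i₀ u
  · push Not at hex
    rw [filter_false_of_mem fun w _ ⟨i, hu, hv⟩ => hex i w hu hv, card_empty]
    exact Nat.zero_le D

theorem card_filter_adj_adj_ne_le_card_mul_card [Fintype ι] [DecidableEq ι]
    (hsupp : ∀ i u v, (G i).Adj u v → u ∈ S i ∧ v ∈ S i)
    (hnd : ∀ i j, i ≠ j → #(S i ∩ S j) ≤ 1) (u v : V) :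
    #(univ.filter fun w => ∃ i j, i ≠ j ∧ (G i).Adj u w ∧ (G j).Adj v w) ≤
      #(univ.filter fun i => u ∈ S i) * #(univ.filter fun j => v ∈ S j) := by
  set P := (univ.filter fun i => u ∈ S i) ×ˢ (univ.filter fun j => v ∈ S j)
  have hsub : (univ.filter fun w => ∃ i j, i ≠ j ∧ (G i).Adj u w ∧ (G j).Adj v w) ⊆
      (P.filter fun p => p.1 ≠ p.2).biUnion fun p => S p.1 ∩ S p.2 := by
    intro w hw
    obtain ⟨i, j, hij, hui, hvj⟩ := (mem_filter.mp hw).2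
    refine mem_biUnion.mpr ⟨(i, j), mem_filter.mpr ⟨?_, hij⟩, ?_⟩
    · simp only [P, mem_product, mem_filter, mem_univ, true_and]
      exact ⟨(hsupp i u w hui).1, (hsupp j v w hvj).1⟩
    · exact mem_inter.mpr ⟨(hsupp i u w hui).2, (hsupp j v w hvj).2⟩
  calc _ ≤ #(P.filter fun p => p.1 ≠ p.2) * 1 :=
        (card_le_card hsub).trans
          (card_biUnion_le_card_mul _ _ _ fun p hp => hnd p.1 p.2 (mem_filter.mp hp).2)
    _ ≤ #P := by rw [mul_one]; exact card_filter_le _ _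
    _ = _ := card_product _ _

theorem card_filter_common_adj_le [Fintype ι] [DecidableEq ι] (u v : V) :
    #(univ.filter fun w => (∃ i, (G i).Adj u w) ∧ ∃ i, (G i).Adj v w) ≤
      #(univ.filter fun w => ∃ i, (G i).Adj u w ∧ (G i).Adj v w) +
        #(univ.filter fun w => ∃ i j, i ≠ j ∧ (G i).Adj u w ∧ (G j).Adj v w) := by
  refine (card_le_card fun w hw => ?_).trans (card_union_le _ _)
  obtain ⟨⟨i, hi⟩, j, hj⟩ := (mem_filter.mp hw).2
  by_cases hij : i = j
  · subst hij
    exact mem_union_left _ (mem_filter.mpr ⟨mem_univ w, i, hi, hj⟩)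
  · exact mem_union_right _ (mem_filter.mpr ⟨mem_univ w, i, j, hij, hi, hj⟩)

end NearlyDisjoint

theorem common_neighbors_and_degree_bound_general (C D : ℕ)
    (V : Type) [Fintype V] [DecidableEq V] (m : ℕ) (G : Fin m → SimpleGraph V)
    [∀ i, DecidableRel (G i).Adj] (S : Fin m → Finset V)
    (hsupp : ∀ i u v, (G i).Adj u v → u ∈ S i ∧ v ∈ S i)
    (hnd : ∀ i j, i ≠ j → (S i ∩ S j).card ≤ 1)
    (hdeg : ∀ i v, (G i).degree v ≤ D)
    (hcount : ∀ v, (univ.filter fun i => v ∈ S i).card ≤ C) :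
    (∀ u v : V, u ≠ v →
      (univ.filter fun w => (∃ i, (G i).Adj u w) ∧ ∃ i, (G i).Adj v w).card ≤ D + C ^ 2) ∧
    (∀ v : V, (univ.filter fun w => ∃ i, (G i).Adj v w).card ≤ C * D) := by
  refine ⟨fun u v huv => ?_, fun v => ?_⟩
  · have hsame := card_filter_adj_adj_same_le hsupp hnd hdeg huv
    have hcross := (card_filter_adj_adj_ne_le_card_mul_card hsupp hnd u v).trans
      (Nat.mul_le_mul (hcount u) (hcount v))
    -- `convert` only reconciles decidability instances: over `Fin m` the filters above
    -- are decided by `Nat.decidableExistsFin`, in the lemmas by `Fintype.decidableExistsFintype`.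
    refine Nat.le_trans ?_ ((Nat.add_le_add hsame hcross).trans_eq (by rw [sq]))
    convert card_filter_common_adj_le u v
  · refine Nat.le_trans ?_ (Nat.mul_le_mul_right D (hcount v))
    convert card_filter_exists_adj_le_card_mul hsupp hdeg v

/-- If `G₁, …, G_m` are nearly disjoint graphs (with vertex sets `S i`) of maximum degree
at most `D` such that each vertex lies in at most `C` of them, then in `G = ⋃ᵢ Gᵢ` every
two distinct vertices have at most `D + C²` common neighbors, and `Δ(G) ≤ CD`. -/
theorem common_neighbors_and_degree_bound (C D : ℕ) (hC : 0 < C) (hD : 0 < D)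
    (V : Type) [Fintype V] [DecidableEq V] (m : ℕ) (G : Fin m → SimpleGraph V)
    [∀ i, DecidableRel (G i).Adj] (S : Fin m → Finset V)
    (hsupp : ∀ i u v, (G i).Adj u v → u ∈ S i ∧ v ∈ S i)
    (hnd : ∀ i j, i ≠ j → (S i ∩ S j).card ≤ 1)
    (hdeg : ∀ i v, (G i).degree v ≤ D)
    (hcount : ∀ v, (univ.filter fun i => v ∈ S i).card ≤ C) :
    (∀ u v : V, u ≠ v →
      (univ.filter fun w => (∃ i, (G i).Adj u w) ∧ ∃ i, (G i).Adj v w).card ≤ D + C ^ 2) ∧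
    (∀ v : V, (univ.filter fun w => ∃ i, (G i).Adj v w).card ≤ C * D) :=
  common_neighbors_and_degree_bound_general C D V m G S hsupp hnd hdeg hcount
end
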